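/- arXiv:2207.01965 — 13 statements merged into one kernel-verified Lean document; each statement's English description precedes it below -/
import Mathlib

section
/- Let n ≥ 1 and let A, B ∈ Mₙ(ℂ) satisfy ‖A‖ = 1 = ‖B‖ in the operator norm induced by the Euclidean norm on ℂⁿ. If ‖A + λB‖² = 1 + |λ|² for all λ ∈ ℂ, then for every λ ∈ ℂ the matrix A + λB is not invertible (equivalently, det(A + λB) = 0 for all λ ∈ ℂ). -/
open scoped Matrix.Norms.L2Operator ComplexConjugate
open Matrix

/-!
`‖A + λB‖² = 1 + |λ|²` is the largest eigenvalue of `(A + λB)ᴴ(A + λB)`, so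
`G(λ, μ) = (Aᴴ + μBᴴ)(A + λB) - (1 + λμ)` is singular whenever `μ = conj λ`. Its determinant is
polynomial in `(λ, μ)` and the antidiagonal `{(λ, conj λ)}` is Zariski dense in `ℂ²`, so `G(λ, μ)`
is singular for all `λ, μ`. At `μ = -λ⁻¹` this says `det (A - (conj λ)⁻¹ B)ᴴ * det (A + λB) = 0`,
so every `λ ≠ 0` or its image under the injective map `λ ↦ -(conj λ)⁻¹` is a root of
`λ ↦ det (A + λB)`. That polynomial therefore has infinitely many roots and vanishes identically.
-/

lemma CStarAlgebra.norm_mem_spectrum_star_mul_self {A : Type*} [CStarAlgebra A] [Nontrivial A]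
    (a : A) : ‖star a * a‖ ∈ spectrum ℝ (star a * a) := by
  obtain h | h := CStarAlgebra.norm_or_neg_norm_mem_spectrum (a := star a * a)
  · exact h
  · have hzero : ‖star a * a‖ = 0 :=
      le_antisymm (by linarith [spectrum_star_mul_self_nonneg _ h]) (norm_nonneg _)
    rw [hzero, neg_zero] at h
    rwa [hzero]

lemma Matrix.det_conjTranspose_mul_self_sub_norm_sq {ι : Type*} [Fintype ι] [DecidableEq ι]
    [Nonempty ι] (M : Matrix ι ι ℂ) : (Mᴴ * M - (‖M‖ ^ 2 : ℂ) • 1).det = 0 := by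
  have h := CStarAlgebra.norm_mem_spectrum_star_mul_self M
  rw [CStarRing.norm_star_mul_self, ← spectrum.algebraMap_mem_iff ℂ, spectrum.mem_iff,
    isUnit_iff_isUnit_det, isUnit_iff_ne_zero, not_not, ← neg_sub, det_neg] at h
  simpa [sq, star_eq_conjTranspose, Algebra.algebraMap_eq_smul_one] using h

section Pencil

variable {ι K : Type*} [Fintype ι] [DecidableEq ι] [Field K]

open Polynomial in
theorem Matrix.det_quadratic_pencil_eq_zero_of_infinite (M₀ M₁ M₂ : Matrix ι ι K) {S : Set K}
    (hS : S.Infinite) (hS₀ : ∀ z ∈ S, (M₀ + z • M₁ + z ^ 2 • M₂).det = 0) (z : K) :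
    (M₀ + z • M₁ + z ^ 2 • M₂).det = 0 := by
  set P : Matrix ι ι K[X] := M₀.map C + (X : K[X]) • M₁.map C + (X ^ 2 : K[X]) • M₂.map C
  have hP (z : K) : P.det.eval z = (M₀ + z • M₁ + z ^ 2 • M₂).det := by
    rw [← coe_evalRingHom, RingHom.map_det]
    congr 1
    ext i j
    simp only [RingHom.mapMatrix_apply, coe_evalRingHom, map_apply, add_apply, smul_apply,
      smul_eq_mul, X_mul_C, X_pow_mul_C, eval_add, eval_C, eval_mul, eval_X, eval_pow, P]
    ring
  have hP₀ : P.det = 0 :=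
    eq_zero_of_infinite_isRoot _ (hS.mono fun z hz ↦ (hP z).trans (hS₀ z hz))
  rw [← hP, hP₀, eval_zero]

theorem Matrix.det_linear_pencil_eq_zero_of_infinite (M₀ M₁ : Matrix ι ι K) {S : Set K}
    (hS : S.Infinite) (hS₀ : ∀ z ∈ S, (M₀ + z • M₁).det = 0) (z : K) :
    (M₀ + z • M₁).det = 0 := by
  simpa using det_quadratic_pencil_eq_zero_of_infinite M₀ M₁ 0 hS (by simpa using hS₀) z

end Pencil

open Complex in
theorem Matrix.det_bilinear_eq_zero_of_forall_conj {ι : Type*} [Fintype ι] [DecidableEq ι]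
    (M₀ M₁ M₂ M₃ : Matrix ι ι ℂ)
    (h : ∀ z : ℂ, (M₀ + z • M₁ + conj z • M₂ + (z * conj z) • M₃).det = 0) (l m : ℂ) :
    (M₀ + l • M₁ + m • M₂ + (l * m) • M₃).det = 0 := by
  -- `conj w = w - c` on the horizontal line `Im w = t`, with `c = 2 t i`
  have hline (t : ℝ) (w : ℂ) :
      (M₀ + w • M₁ + (w - 2 * t * I) • M₂ + (w * (w - 2 * t * I)) • M₃).det = 0 := by
    set c : ℂ := 2 * t * I
    have hS : (Set.range fun s : ℝ ↦ (s + t * I : ℂ)).Infinite :=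
      Set.infinite_range_of_injective fun a b hab ↦ by simpa using congrArg re hab
    have hpencil (w : ℂ) : M₀ + w • M₁ + (w - c) • M₂ + (w * (w - c)) • M₃ =
        M₀ - c • M₂ + w • (M₁ + M₂ - c • M₃) + w ^ 2 • M₃ := by module
    rw [hpencil]
    refine det_quadratic_pencil_eq_zero_of_infinite _ _ _ hS ?_ w
    rintro _ ⟨s, rfl⟩
    have hconj : conj ((s : ℂ) + t * I) = s + t * I - c := by
      apply Complex.ext <;> simp [c]; ring
    rw [← hpencil, ← hconj]
    exact h _
  -- for fixed `l`, `hline` makes the pencil in `s = l - m` vanish on the imaginary axis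
  have hS : (Set.range fun t : ℝ ↦ (2 * t * I : ℂ)).Infinite :=
    Set.infinite_range_of_injective fun a b hab ↦ by simpa using congrArg im hab
  have hpencil (s : ℂ) : M₀ + l • M₁ + (l - s) • M₂ + (l * (l - s)) • M₃ =
      (M₀ + l • M₁ + l • M₂ + (l * l) • M₃) + s • (-M₂ - l • M₃) := by module
  have hlm := det_linear_pencil_eq_zero_of_infinite _ _ hS
    (by rintro _ ⟨t, rfl⟩; rw [← hpencil]; exact hline t l) (l - m)
  rwa [← hpencil, sub_sub_cancel] at hlm

theorem Set.infinite_of_eventually_mem_or_mem {α : Type*} [Infinite α] {Z : Set α} {g : α → α}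
    (hg : g.Injective) (h : ∀ᶠ z in Filter.cofinite, z ∈ Z ∨ g z ∈ Z) : Z.Infinite := by
  intro hZ
  have hgood : {z | z ∉ Z ∧ g z ∈ Z} ∈ Filter.cofinite :=
    (h.and hZ.compl_mem_cofinite).mono fun z ⟨hz, hzZ⟩ ↦ ⟨hzZ, hz.resolve_left hzZ⟩
  refine ((Set.infinite_of_finite_compl hgood).image hg.injOn).mono ?_ hZ
  rintro _ ⟨z, hz, rfl⟩
  exact hz.2

theorem pythagoras_orthogonal_not_invertible_general
    {n : ℕ} (hn : 1 ≤ n) (A B : Matrix (Fin n) (Fin n) ℂ)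
    (h : ∀ l : ℂ, ‖A + l • B‖ ^ 2 = 1 + ‖l‖ ^ 2) :
    ∀ l : ℂ, (A + l • B).det = 0 := by
  have : Nonempty (Fin n) := ⟨⟨0, hn⟩⟩
  have hexpand (l m : ℂ) : (Aᴴ + m • Bᴴ) * (A + l • B) - (1 + l * m) • 1 =
      (Aᴴ * A - 1) + l • (Aᴴ * B) + m • (Bᴴ * A) + (l * m) • (Bᴴ * B - 1) := by
    simp only [Matrix.add_mul, Matrix.mul_add, Matrix.smul_mul, Matrix.mul_smul]
    module
  have hgram (l m : ℂ) : ((Aᴴ + m • Bᴴ) * (A + l • B) - (1 + l * m) • 1).det = 0 := by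
    rw [hexpand]
    refine det_bilinear_eq_zero_of_forall_conj _ _ _ _ (fun z ↦ ?_) l m
    have hsq : (‖A + z • B‖ : ℂ) ^ 2 = 1 + z * conj z := by
      rw [Complex.mul_conj, Complex.normSq_eq_norm_sq]
      exact_mod_cast h z
    rw [← hexpand, ← hsq]
    simpa using det_conjTranspose_mul_self_sub_norm_sq (A + z • B)
  have hsplit (l : ℂ) (hl : l ≠ 0) :
      (A + l • B).det = 0 ∨ (A + (-(conj l)⁻¹) • B).det = 0 := by
    have hfactor := hgram l (-l⁻¹)
    have hct : Aᴴ + (-l⁻¹) • Bᴴ = (A + (-(conj l)⁻¹) • B)ᴴ := by simp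
    rw [mul_neg, mul_inv_cancel₀ hl, add_neg_cancel, zero_smul, sub_zero, det_mul, hct,
      det_conjTranspose, mul_eq_zero, star_eq_zero] at hfactor
    exact hfactor.symm
  have hZ : {l | (A + l • B).det = 0}.Infinite :=
    Set.infinite_of_eventually_mem_or_mem
      (neg_injective.comp (inv_injective.comp (starRingEnd ℂ).injective))
      ((Filter.eventually_cofinite_ne 0).mono hsplit)
  exact det_linear_pencil_eq_zero_of_infinite A B hZ fun _ hz ↦ hz

/-- If `A, B ∈ Mₙ(ℂ)` have operator norm one and are Pythagoras orthogonal
(`‖A + λB‖² = 1 + |λ|²` for all `λ`), then `A + λB` is singular for every `λ ∈ ℂ`. -/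
theorem pythagoras_orthogonal_not_invertible
    {n : ℕ} (hn : 1 ≤ n) (A B : Matrix (Fin n) (Fin n) ℂ)
    (hA : ‖A‖ = 1) (hB : ‖B‖ = 1)
    (h : ∀ l : ℂ, ‖A + l • B‖ ^ 2 = 1 + ‖l‖ ^ 2) :
    ∀ l : ℂ, (A + l • B).det = 0 :=
  pythagoras_orthogonal_not_invertible_general hn A B h
end

section
/- Let n ≥ 1 and let A, B ∈ Mₙ(ℂ) be Hermitian matrices with B positive semidefinite. If det(A + λB) = 0 for all λ ∈ ℂ, then ker A ∩ ker B ≠ 0, i.e. there exists a nonzero vector v ∈ ℂⁿ with Av = 0 and Bv = 0. -/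
open scoped Matrix ComplexOrder

/-!
Take `n + 1` distinct real numbers `λᵢ` and nonzero vectors `vᵢ ∈ ker (A + λᵢ B)`. Since `A` and `B`
are Hermitian, `(λᵢ - λⱼ) vᵢ* B vⱼ = 0`, so the `vᵢ` are pairwise orthogonal for the form of `B`.
Orthogonal vectors with `vᵢ* B vᵢ ≠ 0` are linearly independent, and `n + 1` vectors of `ℂⁿ` are not,
so some `vₖ* B vₖ = 0`. As `B` is positive semidefinite this forces `B vₖ = 0`, and then `A vₖ = 0`.
-/

namespace Matrix

variable {m 𝕜 : Type*} [RCLike 𝕜] [Fintype m]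

theorem IsHermitian.star_mulVec_dotProduct {A : Matrix m m 𝕜} (hA : A.IsHermitian) (x y : m → 𝕜) :
    star (A *ᵥ x) ⬝ᵥ y = star x ⬝ᵥ A *ᵥ y := by
  rw [dotProduct_mulVec, star_mulVec, hA.eq]

theorem IsHermitian.star_dotProduct_mulVec_eq_zero_of_pencil {A B : Matrix m m 𝕜}
    (hA : A.IsHermitian) (hB : B.IsHermitian) {a b : ℝ} (hab : a ≠ b) {x y : m → 𝕜}
    (hx : (A + (a : 𝕜) • B) *ᵥ x = 0) (hy : (A + (b : 𝕜) • B) *ᵥ y = 0) :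
    star x ⬝ᵥ B *ᵥ y = 0 := by
  rw [add_mulVec, smul_mulVec, add_eq_zero_iff_eq_neg] at hx hy
  have h : ((a : 𝕜) - b) * (star x ⬝ᵥ B *ᵥ y) = 0 := by
    have h₁ := hA.star_mulVec_dotProduct x y
    simp only [hx, hy, star_neg, star_smul, RCLike.star_def, RCLike.conj_ofReal, neg_dotProduct,
      smul_dotProduct, hB.star_mulVec_dotProduct, dotProduct_neg, dotProduct_smul, smul_eq_mul] at h₁
    linear_combination -h₁
  simpa [sub_eq_zero, hab] using h

theorem PosSemidef.exists_mulVec_eq_zero_of_not_linearIndependent {ι : Type*} {B : Matrix m m 𝕜}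
    (hB : B.PosSemidef) {v : ι → m → 𝕜} (hv : ¬ LinearIndependent 𝕜 v)
    (horth : Pairwise fun i j => star (v i) ⬝ᵥ B *ᵥ v j = 0) : ∃ i, B *ᵥ v i = 0 := by
  classical
  have sesq : ∀ x y, toLinearMapₛₗ₂' 𝕜 (starRingEnd 𝕜) (RingHom.id 𝕜) B x y = star x ⬝ᵥ B *ᵥ y :=
    fun x y => by
      simp only [toLinearMapₛₗ₂'_apply, dotProduct, mulVec, Finset.mul_sum, smul_eq_mul,
        Pi.star_apply, RingHom.id_apply, RCLike.star_def]
      ac_rfl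
  by_contra! hBv
  refine hv (LinearMap.linearIndependent_of_isOrthoᵢ
    (B := toLinearMapₛₗ₂' 𝕜 (starRingEnd 𝕜) (RingHom.id 𝕜) B) (fun i j hij => ?_) fun i => ?_)
  · exact (sesq _ _).trans (horth hij)
  · rw [sesq, Ne, hB.dotProduct_mulVec_zero_iff]; exact hBv i

end Matrix

theorem exists_common_kernel_vector_general
    {n : ℕ} (A B : Matrix (Fin n) (Fin n) ℂ)
    (hA : A.IsHermitian) (hB : B.PosSemidef)
    (hdet : ∀ l : ℂ, (A + l • B).det = 0) :
    ∃ v : Fin n → ℂ, v ≠ 0 ∧ A *ᵥ v = 0 ∧ B *ᵥ v = 0 := by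
  have hker (i : Fin (n + 1)) : ∃ v, v ≠ 0 ∧ (A + ((i : ℝ) : ℂ) • B) *ᵥ v = 0 :=
    Matrix.exists_mulVec_eq_zero_iff.mpr (hdet _)
  choose v hv0 hv using hker
  have hdep : ¬ LinearIndependent ℂ v := fun h => by
    simpa using h.fintype_card_le_finrank
  have horth : Pairwise fun i j => star (v i) ⬝ᵥ B *ᵥ v j = 0 := fun i j hij =>
    hA.star_dotProduct_mulVec_eq_zero_of_pencil hB.isHermitian (a := i) (b := j)
      (by exact_mod_cast Fin.val_injective.ne hij) (hv i) (hv j)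
  obtain ⟨k, hBk⟩ := hB.exists_mulVec_eq_zero_of_not_linearIndependent hdep horth
  refine ⟨v k, hv0 k, ?_, hBk⟩
  simpa [Matrix.add_mulVec, Matrix.smul_mulVec, hBk] using hv k

/-- If `A, B ∈ Mₙ(ℂ)` are Hermitian, `B` is positive semidefinite, and
`det(A + λB) = 0` for all `λ ∈ ℂ`, then the kernels of `A` and `B` have a nonzero
common vector. -/
theorem exists_common_kernel_vector
    {n : ℕ} (hn : 1 ≤ n) (A B : Matrix (Fin n) (Fin n) ℂ)
    (hA : A.IsHermitian) (hB : B.PosSemidef)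
    (hdet : ∀ l : ℂ, (A + l • B).det = 0) :
    ∃ v : Fin n → ℂ, v ≠ 0 ∧ A *ᵥ v = 0 ∧ B *ᵥ v = 0 :=
  exists_common_kernel_vector_general A B hA hB hdet
end

section
/- Let n ≥ 1 and let A, B ∈ Mₙ(ℂ) be nonzero Hermitian matrices with B positive semidefinite. Then A and B are not Pythagoras orthogonal: there exists λ ∈ ℂ such that ‖A + λB‖² ≠ ‖A‖² + |λ|²‖B‖², where ‖·‖ is the operator norm induced by the Euclidean norm on ℂⁿ. -/
open scoped Matrix.Norms.L2Operator ComplexOrder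

/-!
Write `a = ‖A‖` and suppose `‖A + tB‖² = a² + t²‖B‖²` for all real `t`. For `Av = av` this gives
`(a‖v‖² + t⟨Bv, v⟩)² ≤ (a² + t²‖B‖²)‖v‖⁴`, so the first-order term `⟨Bv, v⟩` vanishes and, `B`
being positive, `Bv = 0`. Hence `ker (a - A) ⊆ ker B`; as `a - A ≥ 0` is bounded below on the
orthogonal complement of its kernel (by compactness of the unit sphere), `sB ≤ a - A` for some
`s > 0`. Then `-a ≤ A ≤ A + sB ≤ a`, so `‖A + sB‖ ≤ a < √(a² + s²‖B‖²)`.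
-/

open scoped InnerProductSpace
open RCLike

lemma nonpos_of_forall_pos_le_mul {a c : ℝ} (h : ∀ t > 0, a ≤ t * c) : a ≤ 0 := by
  by_contra! ha
  have hc : 0 < c := by simpa using ha.trans_le (h 1 one_pos)
  have := h (a / (2 * c)) (by positivity)
  rw [div_mul_eq_mul_div, mul_div_mul_right _ _ hc.ne'] at this
  linarith

namespace ContinuousLinearMap

variable {𝕜 E : Type*} [RCLike 𝕜] [NormedAddCommGroup E] [InnerProductSpace 𝕜 E]

lemma abs_re_inner_map_self_le (T : E →L[𝕜] E) (x : E) :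
    |re ⟪T x, x⟫_𝕜| ≤ ‖T‖ * ‖x‖ ^ 2 :=
  calc |re ⟪T x, x⟫_𝕜| ≤ ‖⟪T x, x⟫_𝕜‖ := abs_re_le_norm _
    _ ≤ ‖T x‖ * ‖x‖ := norm_inner_le_norm _ _
    _ ≤ ‖T‖ * ‖x‖ * ‖x‖ := by gcongr; exact le_opNorm _ _
    _ = ‖T‖ * ‖x‖ ^ 2 := by ring

lemma norm_le_of_forall_abs_re_inner_le {T : E →L[𝕜] E} (hT : T.IsSymmetric) {r : ℝ}
    (hr : 0 ≤ r) (h : ∀ x, |re ⟪T x, x⟫_𝕜| ≤ r * ‖x‖ ^ 2) : ‖T‖ ≤ r := by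
  rw [T.norm_eq_iSup_rayleighQuotient hT]
  refine ciSup_le fun x => ?_
  rcases eq_or_ne x 0 with rfl | hx
  · simpa using hr
  rw [rayleighQuotient, reApplyInnerSelf_apply, abs_div, abs_sq, div_le_iff₀ (by positivity)]
  exact h x

lemma re_inner_add_smul_apply_self (T S : E →L[𝕜] E) (t : ℝ) (x : E) :
    re ⟪(T + (t : 𝕜) • S) x, x⟫_𝕜 = re ⟪T x, x⟫_𝕜 + t * re ⟪S x, x⟫_𝕜 := by
  simp only [add_apply, smul_apply, inner_add_left, inner_smul_left, conj_ofReal, map_add,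
    re_ofReal_mul]

lemma inner_map_add_self_of_apply_eq_zero {T : E →L[𝕜] E} (hT : T.IsSymmetric) {u : E}
    (hu : T u = 0) (w : E) : ⟪T (u + w), u + w⟫_𝕜 = ⟪T w, w⟫_𝕜 := by
  rw [map_add, hu, zero_add, inner_add_right, ← coe_coe, hT, coe_coe, hu, inner_zero_right,
    zero_add]

lemma IsPositive.apply_eq_zero_of_re_inner_eq_zero {P : E →L[𝕜] E} (hP : P.IsPositive)
    {x : E} (hx : re ⟪P x, x⟫_𝕜 = 0) : P x = 0 := by
  have hsymm : ⟪P (P x), x⟫_𝕜 = ⟪P x, P x⟫_𝕜 := hP.isSymmetric _ _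
  have key : ∀ t > 0, 2 * ‖P x‖ ^ 2 ≤ t * (‖P‖ * ‖P x‖ ^ 2) := by
    intro t ht
    have h0 := hP.re_inner_nonneg_left (x - (t : 𝕜) • P x)
    have hq := le_of_abs_le (abs_re_inner_map_self_le P (P x))
    simp only [map_sub, map_smul, inner_sub_left, inner_sub_right, inner_smul_left,
      inner_smul_right, hsymm, conj_ofReal, re_ofReal_mul, hx,
      inner_self_eq_norm_sq_to_K, ← ofReal_pow, ofReal_re] at h0
    refine le_of_mul_le_mul_left ?_ ht
    nlinarith [mul_le_mul_of_nonneg_left hq (mul_self_nonneg t)]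
  have := nonpos_of_forall_pos_le_mul key
  exact norm_eq_zero.1 (by nlinarith [norm_nonneg (P x)])

lemma apply_eq_zero_of_apply_eq_norm_smul {T S : E →L[𝕜] E} (hS : S.IsPositive) (hT : 0 < ‖T‖)
    {c : ℝ} (h : ∀ t : ℝ, 0 < t → ‖T + (t : 𝕜) • S‖ ^ 2 ≤ ‖T‖ ^ 2 + t ^ 2 * c)
    {v : E} (hv : T v = (‖T‖ : 𝕜) • v) : S v = 0 := by
  rcases eq_or_ne v 0 with rfl | hv0
  · exact map_zero S
  have hβ := hS.re_inner_nonneg_left v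
  have key : ∀ t > 0, 2 * ‖T‖ * ‖v‖ ^ 2 * re ⟪S v, v⟫_𝕜 ≤ t * (c * ‖v‖ ^ 4) := by
    intro t ht
    have hre : re ⟪(T + (t : 𝕜) • S) v, v⟫_𝕜 = ‖T‖ * ‖v‖ ^ 2 + t * re ⟪S v, v⟫_𝕜 := by
      rw [re_inner_add_smul_apply_self, hv, inner_smul_left, conj_ofReal, re_ofReal_mul,
        inner_self_eq_norm_sq_to_K, ← ofReal_pow, ofReal_re]
    have hle := le_of_abs_le (abs_re_inner_map_self_le (T + (t : 𝕜) • S) v)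
    rw [hre] at hle
    have hsq : (‖T‖ * ‖v‖ ^ 2 + t * re ⟪S v, v⟫_𝕜) ^ 2 ≤ (‖T‖ ^ 2 + t ^ 2 * c) * (‖v‖ ^ 2) ^ 2 :=
      calc _ ≤ (‖T + (t : 𝕜) • S‖ * ‖v‖ ^ 2) ^ 2 := by gcongr
        _ = ‖T + (t : 𝕜) • S‖ ^ 2 * (‖v‖ ^ 2) ^ 2 := by ring
        _ ≤ _ := by gcongr; exact h t ht
    refine le_of_mul_le_mul_left ?_ ht
    nlinarith [sq_nonneg (t * re ⟪S v, v⟫_𝕜)]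
  refine hS.apply_eq_zero_of_re_inner_eq_zero (le_antisymm ?_ hβ)
  have := nonpos_of_forall_pos_le_mul key
  exact nonpos_of_mul_nonpos_right this (by positivity)

section FiniteDimensional

variable [FiniteDimensional 𝕜 E]

lemma IsPositive.exists_pos_mul_norm_sq_le_re_inner {P : E →L[𝕜] E} (hP : P.IsPositive) :
    ∃ δ > 0, ∀ w ∈ P.kerᗮ, δ * ‖w‖ ^ 2 ≤ re ⟪P w, w⟫_𝕜 := by
  set K := P.kerᗮ
  have := FiniteDimensional.proper_rclike 𝕜 E
  have hK : IsCompact (Metric.sphere (0 : E) 1 ∩ K) :=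
    (isCompact_sphere 0 1).inter_right P.ker.isClosed_orthogonal
  have hpos : ∀ w ∈ Metric.sphere (0 : E) 1 ∩ K, 0 < P.reApplyInnerSelf w := by
    rintro w ⟨hw1, hwK⟩
    refine (hP.re_inner_nonneg_left w).lt_of_ne' fun h0 => ?_
    have hw0 : w = 0 := P.ker.orthogonal_disjoint.le_bot ⟨?_, hwK⟩
    · simp [hw0] at hw1
    · exact hP.apply_eq_zero_of_re_inner_eq_zero h0
  obtain ⟨δ, hδ, hδle⟩ := hK.exists_forall_le' P.reApplyInnerSelf_continuous.continuousOn hpos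
  refine ⟨δ, hδ, fun w hw => ?_⟩
  rcases eq_or_ne w 0 with rfl | hw0
  · simp
  have hunit := hδle ((‖w‖⁻¹ : 𝕜) • w) ⟨by simp [norm_smul, hw0], K.smul_mem _ hw⟩
  rw [reApplyInnerSelf_smul, reApplyInnerSelf_apply, norm_inv, norm_ofReal, abs_norm,
    inv_pow, ← div_eq_inv_mul, le_div_iff₀ (by positivity)] at hunit
  exact hunit

lemma IsPositive.exists_pos_mul_re_inner_le {P Q : E →L[𝕜] E} (hP : P.IsPositive)
    (hQ : Q.IsPositive) (hker : P.ker ≤ Q.ker) :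
    ∃ s > 0, ∀ x, s * re ⟪Q x, x⟫_𝕜 ≤ re ⟪P x, x⟫_𝕜 := by
  obtain ⟨δ, hδ, hgap⟩ := hP.exists_pos_mul_norm_sq_le_re_inner
  refine ⟨δ / (‖Q‖ + 1), by positivity, fun x => ?_⟩
  obtain ⟨u, hu, w, hw, rfl⟩ := P.ker.exists_add_mem_mem_orthogonal x
  rw [inner_map_add_self_of_apply_eq_zero hP.isSymmetric hu,
    inner_map_add_self_of_apply_eq_zero hQ.isSymmetric (hker hu)]
  calc δ / (‖Q‖ + 1) * re ⟪Q w, w⟫_𝕜 ≤ δ / (‖Q‖ + 1) * (‖Q‖ * ‖w‖ ^ 2) := by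
        gcongr; exact le_of_abs_le (abs_re_inner_map_self_le Q w)
    _ ≤ δ * ‖w‖ ^ 2 := by
        rw [div_mul_eq_mul_div, div_le_iff₀ (by positivity)]
        nlinarith [mul_nonneg hδ.le (sq_nonneg ‖w‖)]
    _ ≤ re ⟪P w, w⟫_𝕜 := hgap w hw

theorem exists_norm_add_smul_sq_ne {T S : E →L[𝕜] E} (hT : T.IsSymmetric) (hS : S.IsPositive)
    (hT0 : T ≠ 0) (hS0 : S ≠ 0) :
    ∃ t : ℝ, ‖T + (t : 𝕜) • S‖ ^ 2 ≠ ‖T‖ ^ 2 + t ^ 2 * ‖S‖ ^ 2 := by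
  by_contra! h
  have ha : 0 < ‖T‖ := norm_pos_iff.2 hT0
  set P : E →L[𝕜] E := (‖T‖ : 𝕜) • ContinuousLinearMap.id 𝕜 E - T
  have hPx (x : E) : re ⟪P x, x⟫_𝕜 = ‖T‖ * ‖x‖ ^ 2 - re ⟪T x, x⟫_𝕜 := by
    simp only [P, sub_apply, smul_apply, id_apply, inner_sub_left, inner_smul_left, conj_ofReal,
      map_sub, re_ofReal_mul, inner_self_eq_norm_sq_to_K, ← ofReal_pow, ofReal_re]
  have hP : P.IsPositive := by
    refine ⟨(LinearMap.IsSymmetric.id.smul (conj_ofReal _)).sub hT, fun x => ?_⟩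
    rw [reApplyInnerSelf_apply, hPx]
    linarith [le_of_abs_le (abs_re_inner_map_self_le T x)]
  have hker : P.ker ≤ S.ker := fun v (hv : P v = 0) => by
    simp only [P, sub_apply, smul_apply, id_apply] at hv
    exact apply_eq_zero_of_apply_eq_norm_smul hS ha (fun t _ => (h t).le)
      (sub_eq_zero.1 hv).symm
  obtain ⟨s, hs, hsP⟩ := hP.exists_pos_mul_re_inner_le hS hker
  have hnorm : ‖T + (s : 𝕜) • S‖ ≤ ‖T‖ := by
    refine norm_le_of_forall_abs_re_inner_le (hT.add (hS.isSymmetric.smul (conj_ofReal s)))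
      ha.le fun x => ?_
    have hTx := abs_le.1 (abs_re_inner_map_self_le T x)
    have hSx := mul_nonneg hs.le (hS.re_inner_nonneg_left x)
    rw [re_inner_add_smul_apply_self, abs_le]
    constructor <;> linarith [hsP x, hPx x]
  have hS' : 0 < ‖S‖ := norm_pos_iff.2 hS0
  nlinarith [h s, pow_le_pow_left₀ (norm_nonneg _) hnorm 2, mul_pos (pow_pos hs 2) (pow_pos hS' 2)]

end FiniteDimensional

end ContinuousLinearMap

theorem hermitian_posSemidef_not_pythagoras_orthogonal_general
    {n : ℕ} (A B : Matrix (Fin n) (Fin n) ℂ)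
    (hA : A.IsHermitian) (hB : B.PosSemidef) (hA0 : A ≠ 0) (hB0 : B ≠ 0) :
    ∃ l : ℂ, ‖A + l • B‖ ^ 2 ≠ ‖A‖ ^ 2 + ‖l‖ ^ 2 * ‖B‖ ^ 2 := by
  obtain ⟨t, ht⟩ := ContinuousLinearMap.exists_norm_add_smul_sq_ne
    (T := Matrix.toEuclideanCLM (𝕜 := ℂ) A) (S := Matrix.toEuclideanCLM (𝕜 := ℂ) B)
    (Matrix.isSymmetric_toEuclideanLin_iff.2 hA)
    ((ContinuousLinearMap.isPositive_toLinearMap_iff _).1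
      (Matrix.isPositive_toEuclideanLin_iff.2 hB))
    ((map_ne_zero_iff _ Matrix.toEuclideanCLM.injective).2 hA0)
    ((map_ne_zero_iff _ Matrix.toEuclideanCLM.injective).2 hB0)
  refine ⟨t, ?_⟩
  rwa [Matrix.cstar_norm_def, Matrix.cstar_norm_def, Matrix.cstar_norm_def, map_add, map_smul,
    Complex.norm_real, Real.norm_eq_abs, sq_abs]

/-- Nonzero Hermitian matrices `A, B ∈ Mₙ(ℂ)` with `B` positive semidefinite are never
Pythagoras orthogonal. -/
theorem hermitian_posSemidef_not_pythagoras_orthogonal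
    {n : ℕ} (hn : 1 ≤ n) (A B : Matrix (Fin n) (Fin n) ℂ)
    (hA : A.IsHermitian) (hB : B.PosSemidef) (hA0 : A ≠ 0) (hB0 : B ≠ 0) :
    ∃ l : ℂ, ‖A + l • B‖ ^ 2 ≠ ‖A‖ ^ 2 + ‖l‖ ^ 2 * ‖B‖ ^ 2 :=
  hermitian_posSemidef_not_pythagoras_orthogonal_general A B hA hB hA0 hB0
end

section
/- Let 𝒜 be a commutative unital C*-algebra and let A, B ∈ 𝒜 with ‖A‖ = 1 = ‖B‖ and B positive (so that φ(B) is a nonnegative real number for every character φ of 𝒜). Let S = {(φ(A), Re φ(B)) : φ a character of 𝒜} ⊆ ℂ × ℝ. Then ‖A + λB‖² = 1 + |λ|² holds for all λ ∈ ℂ if and only if S is contained in the unit half-ball {(ζ, t) ∈ ℂ × ℝ : |ζ|² + t² ≤ 1, t ≥ 0} and S contains the hemisphere {(ζ, t) ∈ ℂ × ℝ : |ζ|² + t² = 1, t ≥ 0}. -/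
/-!
By Gelfand duality `‖x‖ = max_φ ‖φ x‖`, and `φ B ≥ 0`, so the norm condition says that
`max_{(a, s) ∈ S} ‖a + λ s‖² = 1 + ‖λ‖²` for every `λ`. Lagrange's identity
`‖a + λ s‖² + ‖a λ̄ - s‖² = (‖a‖² + s²)(1 + ‖λ‖²)` shows that on the half ball this quantity is at
most `1 + ‖λ‖²`, with equality exactly at the hemisphere point where `a λ̄ = s`. This gives the
converse direction at once. Conversely, testing the condition at well-chosen `λ` puts `S` in the
half ball, and for `λ ≠ 0` the maximiser in `S` has to be that hemisphere point. These points
sweep out the open hemisphere `0 < t < 1`, and `S` is closed, so it contains the whole closed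
hemisphere.
-/

open WeakDual Complex ComplexConjugate

def unitHalfBall : Set (ℂ × ℝ) := {p | ‖p.1‖ ^ 2 + p.2 ^ 2 ≤ 1 ∧ 0 ≤ p.2}

def unitHemisphere : Set (ℂ × ℝ) := {p | ‖p.1‖ ^ 2 + p.2 ^ 2 = 1 ∧ 0 ≤ p.2}

theorem norm_add_mul_ofReal_sq_add_norm_mul_conj_sub_sq (a l : ℂ) (s : ℝ) :
    ‖a + l * s‖ ^ 2 + ‖a * conj l - s‖ ^ 2 = (‖a‖ ^ 2 + s ^ 2) * (1 + ‖l‖ ^ 2) := by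
  simp only [Complex.sq_norm, normSq_apply, add_re, add_im, sub_re, sub_im, mul_re, mul_im,
    ofReal_re, ofReal_im, conj_re, conj_im]
  ring

theorem norm_add_mul_ofReal_sq_le (a l : ℂ) (s : ℝ) :
    ‖a + l * s‖ ^ 2 ≤ (‖a‖ ^ 2 + s ^ 2) * (1 + ‖l‖ ^ 2) := by
  rw [← norm_add_mul_ofReal_sq_add_norm_mul_conj_sub_sq]
  exact le_add_of_nonneg_right (sq_nonneg _)

theorem sq_add_sq_le_one_of_forall_norm_add_mul_sq_le {a : ℂ} {s : ℝ}
    (h : ∀ l : ℂ, ‖a + l * s‖ ^ 2 ≤ 1 + ‖l‖ ^ 2) : ‖a‖ ^ 2 + s ^ 2 ≤ 1 := by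
  rcases eq_or_ne a 0 with rfl | ha
  · -- for `r = s / (s² - 1)` one has `(r s)² - r² = s² / (s² - 1) > 1`
    by_contra! hs
    have hd : 0 < s ^ 2 - 1 := by simpa using hs
    have hr := h (s / (s ^ 2 - 1) : ℝ)
    rw [zero_add, ← ofReal_mul, norm_real, norm_real, Real.norm_eq_abs, Real.norm_eq_abs, sq_abs,
      sq_abs] at hr
    field_simp at hr
    nlinarith
  · -- choosing `conj l = s / a` makes the defect in Lagrange's identity vanish
    set l : ℂ := conj (s / a)
    have hl : a * conj l - s = 0 := by simp [l, mul_div_cancel₀ _ ha]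
    have key := norm_add_mul_ofReal_sq_add_norm_mul_conj_sub_sq a l s
    rw [hl, norm_zero] at key
    have h1 : (‖a‖ ^ 2 + s ^ 2) * (1 + ‖l‖ ^ 2) ≤ 1 * (1 + ‖l‖ ^ 2) := by linarith [h l]
    exact le_of_mul_le_mul_right h1 (by positivity)

theorem mul_conj_eq_and_sq_add_sq_eq_one_of_le {a l : ℂ} {s : ℝ}
    (hp : ‖a‖ ^ 2 + s ^ 2 ≤ 1) (h : 1 + ‖l‖ ^ 2 ≤ ‖a + l * s‖ ^ 2) :
    a * conj l = s ∧ ‖a‖ ^ 2 + s ^ 2 = 1 := by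
  have key := norm_add_mul_ofReal_sq_add_norm_mul_conj_sub_sq a l s
  have hl : 0 < 1 + ‖l‖ ^ 2 := by positivity
  have hdefect : ‖a * conj l - s‖ ^ 2 ≤ 0 := by nlinarith
  have hdefect_eq : ‖a * conj l - s‖ = 0 :=
    pow_eq_zero_iff two_ne_zero |>.mp (le_antisymm hdefect (sq_nonneg _))
  refine ⟨sub_eq_zero.mp (norm_eq_zero.mp hdefect_eq), le_antisymm hp ?_⟩
  by_contra! hlt
  nlinarith [sq_nonneg ‖a * conj l - s‖]

theorem eq_of_mul_conj_eq {l : ℂ} (hl : l ≠ 0) {p q : ℂ × ℝ} (hp : p ∈ unitHemisphere)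
    (hq : q ∈ unitHemisphere) (hpl : p.1 * conj l = p.2) (hql : q.1 * conj l = q.2) :
    p = q := by
  have snd_sq : ∀ r ∈ unitHemisphere, r.1 * conj l = r.2 →
      r.2 ^ 2 * (1 + ‖l‖ ^ 2) = ‖l‖ ^ 2 := by
    rintro r ⟨hr, -⟩ hrl
    have := congrArg (‖·‖ ^ 2) hrl
    simp only [norm_mul, norm_conj, norm_real, Real.norm_eq_abs, sq_abs, mul_pow] at this
    linear_combination -this + ‖l‖ ^ 2 * hr
  have h2 : p.2 = q.2 := by
    have := (snd_sq p hp hpl).trans (snd_sq q hq hql).symm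
    have hpos : (0 : ℝ) < 1 + ‖l‖ ^ 2 := by positivity
    exact (pow_left_inj₀ hp.2 hq.2 two_ne_zero).mp (mul_right_cancel₀ hpos.ne' this)
  have h1 : p.1 = q.1 := mul_right_cancel₀ ((map_ne_zero _).mpr hl) (by rw [hpl, hql, h2])
  exact Prod.ext h1 h2

theorem exists_mem_unitHemisphere_mul_conj_eq (l : ℂ) :
    ∃ p ∈ unitHemisphere, p.1 * conj l = p.2 := by
  set σ := √(1 + ‖l‖ ^ 2)
  have hσ : 0 < σ := by positivity
  have hσ2 : σ ^ 2 = 1 + ‖l‖ ^ 2 := Real.sq_sqrt (by positivity)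
  set e := exp (arg l * I)
  have he : ‖e‖ = 1 := norm_exp_ofReal_mul_I _
  refine ⟨(e / σ, ‖l‖ / σ), ⟨?_, by positivity⟩, ?_⟩
  · rw [norm_div, he, norm_real, Real.norm_eq_abs, abs_of_pos hσ]
    field_simp
    linarith
  · dsimp only
    conv_lhs => rw [← norm_mul_exp_arg_mul_I l]
    rw [map_mul, conj_ofReal]
    have : e * conj e = 1 := by rw [mul_conj, normSq_eq_norm_sq, he]; simp
    push_cast
    linear_combination (‖l‖ : ℂ) / σ * this

theorem unitHemisphere_subset_closure :
    unitHemisphere ⊆ closure (unitHemisphere ∩ {p | p.2 ∈ Set.Ioo 0 1}) := by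
  rintro ⟨ζ, t⟩ ⟨hζt, ht⟩
  set γ : ℝ → ℂ × ℝ := fun s ↦ (√(1 - s ^ 2) * exp (arg ζ * I), s)
  have hγ : Continuous γ := by fun_prop
  have hγt : γ t = (ζ, t) := by
    have : ‖ζ‖ = √(1 - t ^ 2) := by
      rw [← Real.sqrt_sq (norm_nonneg ζ)]; congr 1; linarith
    simp only [γ, ← this, norm_mul_exp_arg_mul_I]
  have ht1 : t ≤ 1 := by nlinarith [norm_nonneg ζ]
  rw [← hγt]
  refine closure_mono (s := γ '' Set.Ioo 0 1) ?_
    (image_closure_subset_closure_image hγ ⟨t, ?_, rfl⟩)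
  · rintro _ ⟨s, hs, rfl⟩
    refine ⟨⟨?_, hs.1.le⟩, hs⟩
    simp only [γ, norm_mul, norm_real, Real.norm_eq_abs, norm_exp_ofReal_mul_I, mul_one, sq_abs]
    rw [Real.sq_sqrt (by nlinarith [hs.1, hs.2])]
    ring
  · rw [closure_Ioo zero_ne_one]
    exact ⟨ht, ht1⟩

section JointSpectrum

variable {S : Set (ℂ × ℝ)} {n : ℂ → ℝ}

theorem unitHemisphere_subset_of_forall_sq_eq (hS : IsClosed S) (hball : S ⊆ unitHalfBall)
    (hn : ∀ l, IsGreatest ((fun p : ℂ × ℝ ↦ ‖p.1 + l * p.2‖) '' S) (n l))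
    (h : ∀ l, n l ^ 2 = 1 + ‖l‖ ^ 2) : unitHemisphere ⊆ S := by
  refine unitHemisphere_subset_closure.trans (closure_minimal ?_ hS)
  rintro ⟨ζ, t⟩ ⟨hζt, ht₀, ht₁⟩
  have hζ : ζ ≠ 0 := by
    rintro rfl
    have : t ^ 2 = 1 := by simpa using hζt.1
    nlinarith
  -- for this `l`, `(ζ, t)` is the only point of the half ball where `‖a + l * s‖² = 1 + ‖l‖²`
  set l : ℂ := t / conj ζ
  have hl : l ≠ 0 := div_ne_zero (by exact_mod_cast ht₀.ne') ((map_ne_zero _).mpr hζ)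
  have hζl : ζ * conj l = t := by
    simp only [l, map_div₀, conj_ofReal, conj_conj, mul_div_cancel₀ _ hζ]
  obtain ⟨p, hpS, hp : ‖p.1 + l * p.2‖ = n l⟩ := (hn l).1
  have hpl := mul_conj_eq_and_sq_add_sq_eq_one_of_le (l := l) (hball hpS).1 (by rw [hp, h])
  rw [eq_of_mul_conj_eq hl hζt ⟨hpl.2, (hball hpS).2⟩ hζl hpl.1]
  exact hpS

theorem forall_sq_eq_one_add_sq_iff (hS : IsClosed S) (hS₀ : ∀ p ∈ S, 0 ≤ p.2)
    (hn : ∀ l, IsGreatest ((fun p : ℂ × ℝ ↦ ‖p.1 + l * p.2‖) '' S) (n l)) :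
    (∀ l, n l ^ 2 = 1 + ‖l‖ ^ 2) ↔ S ⊆ unitHalfBall ∧ unitHemisphere ⊆ S := by
  have le_of_mem : ∀ l, ∀ p ∈ S, ‖p.1 + l * p.2‖ ^ 2 ≤ n l ^ 2 := fun l p hp ↦
    pow_le_pow_left₀ (norm_nonneg _) ((hn l).2 ⟨p, hp, rfl⟩) 2
  constructor
  · intro h
    have hball : S ⊆ unitHalfBall := fun p hp ↦
      ⟨sq_add_sq_le_one_of_forall_norm_add_mul_sq_le fun l ↦ h l ▸ le_of_mem l p hp, hS₀ p hp⟩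
    exact ⟨hball, unitHemisphere_subset_of_forall_sq_eq hS hball hn h⟩
  · rintro ⟨hball, hsphere⟩ l
    obtain ⟨p, hpS, hp : ‖p.1 + l * p.2‖ = n l⟩ := (hn l).1
    obtain ⟨q, hq, hql⟩ := exists_mem_unitHemisphere_mul_conj_eq l
    apply le_antisymm
    · calc n l ^ 2 = ‖p.1 + l * p.2‖ ^ 2 := by rw [hp]
        _ ≤ (‖p.1‖ ^ 2 + p.2 ^ 2) * (1 + ‖l‖ ^ 2) := norm_add_mul_ofReal_sq_le _ _ _
        _ ≤ 1 + ‖l‖ ^ 2 := mul_le_of_le_one_left (by positivity) (hball hpS).1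
    · calc 1 + ‖l‖ ^ 2 = ‖q.1 + l * q.2‖ ^ 2 := by
            have := norm_add_mul_ofReal_sq_add_norm_mul_conj_sub_sq q.1 l q.2
            rw [hql, sub_self, norm_zero, hq.1] at this
            linarith
        _ ≤ n l ^ 2 := le_of_mem l q (hsphere hq)

end JointSpectrum

namespace WeakDual.CharacterSpace

variable {𝒜 : Type*} [CommCStarAlgebra 𝒜]

theorem exists_norm_apply_eq [Nontrivial 𝒜] (x : 𝒜) : ∃ φ : characterSpace ℂ 𝒜, ‖φ x‖ = ‖x‖ := by
  obtain ⟨z, hz, hzx⟩ := spectrum.exists_nnnorm_eq_spectralRadius x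
  obtain ⟨φ, rfl⟩ := mem_spectrum_iff_exists.mp hz
  rw [IsStarNormal.spectralRadius_eq_nnnorm, ENNReal.coe_inj] at hzx
  exact ⟨φ, congrArg NNReal.toReal hzx⟩

theorem isGreatest_range_norm_apply [Nontrivial 𝒜] (x : 𝒜) :
    IsGreatest (Set.range fun φ : characterSpace ℂ 𝒜 ↦ ‖φ x‖) ‖x‖ :=
  ⟨exists_norm_apply_eq x, by rintro _ ⟨φ, rfl⟩; exact AlgHom.norm_apply_le_self φ x⟩

theorem apply_star_mul_self (φ : characterSpace ℂ 𝒜) (C : 𝒜) :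
    φ (star C * C) = normSq (φ C) := by
  rw [map_mul, map_star, ← mul_conj, mul_comm]
  rfl

end WeakDual.CharacterSpace

section CommCStarAlgebra

open CharacterSpace

variable {𝒜 : Type*} [CommCStarAlgebra 𝒜]

def reJointSpectrum (A B : 𝒜) : Set (ℂ × ℝ) :=
  Set.range fun φ : characterSpace ℂ 𝒜 ↦ (φ A, (φ B).re)

theorem isClosed_reJointSpectrum (A B : 𝒜) : IsClosed (reJointSpectrum A B) := by
  have hcont (x : 𝒜) : Continuous fun φ : characterSpace ℂ 𝒜 ↦ φ x :=
    (eval_continuous x).comp continuous_subtype_val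
  exact (isCompact_range ((hcont A).prodMk (continuous_re.comp (hcont B)))).isClosed

theorem isGreatest_norm_add_smul_star_mul_self [Nontrivial 𝒜] (A C : 𝒜) (l : ℂ) :
    IsGreatest ((fun p : ℂ × ℝ ↦ ‖p.1 + l * p.2‖) '' reJointSpectrum A (star C * C))
      ‖A + l • (star C * C)‖ := by
  convert isGreatest_range_norm_apply (A + l • (star C * C)) using 1
  rw [reJointSpectrum, ← Set.range_comp]
  congr 1
  funext φ
  simp [apply_star_mul_self]

end CommCStarAlgebra

theorem pythagoras_orthogonal_commutative_iff_joint_spectrum_general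
    {𝒜 : Type*} [NormedCommRing 𝒜] [StarRing 𝒜] [CStarRing 𝒜]
    [NormedAlgebra ℂ 𝒜] [StarModule ℂ 𝒜] [CompleteSpace 𝒜]
    (A B : 𝒜) (hA : ‖A‖ = 1) (hBpos : ∃ C : 𝒜, B = star C * C) :
    (∀ l : ℂ, ‖A + l • B‖ ^ 2 = 1 + ‖l‖ ^ 2) ↔
      ({p : ℂ × ℝ | ∃ φ : WeakDual.characterSpace ℂ 𝒜, p = (φ A, (φ B).re)} ⊆
          {p : ℂ × ℝ | ‖p.1‖ ^ 2 + p.2 ^ 2 ≤ 1 ∧ 0 ≤ p.2} ∧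
        {p : ℂ × ℝ | ‖p.1‖ ^ 2 + p.2 ^ 2 = 1 ∧ 0 ≤ p.2} ⊆
          {p : ℂ × ℝ | ∃ φ : WeakDual.characterSpace ℂ 𝒜, p = (φ A, (φ B).re)}) := by
  let _ : CommCStarAlgebra 𝒜 := {}
  have : Nontrivial 𝒜 := nontrivial_of_ne A 0 (by rintro rfl; simp at hA)
  obtain ⟨C, rfl⟩ := hBpos
  have hS : {p : ℂ × ℝ | ∃ φ : characterSpace ℂ 𝒜, p = (φ A, (φ (star C * C)).re)} =
      reJointSpectrum A (star C * C) :=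
    Set.ext fun _ ↦ exists_congr fun _ ↦ eq_comm
  rw [hS]
  refine forall_sq_eq_one_add_sq_iff (isClosed_reJointSpectrum _ _) ?_
    (isGreatest_norm_add_smul_star_mul_self A C)
  rintro _ ⟨φ, rfl⟩
  simp only [CharacterSpace.apply_star_mul_self, ofReal_re]
  exact normSq_nonneg _

/-- Let `𝒜` be a commutative unital C*-algebra, `A, B ∈ 𝒜` with `‖A‖ = 1 = ‖B‖` and `B`
positive, and let `S = {(φ(A), Re φ(B)) : φ a character of 𝒜}`.  Then `A ⊥_P B` iff `S` is
contained in the closed unit half-ball `{(ζ,t) : |ζ|² + t² ≤ 1, t ≥ 0}` and `S` contains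
the hemisphere `{(ζ,t) : |ζ|² + t² = 1, t ≥ 0}`. -/
theorem pythagoras_orthogonal_commutative_iff_joint_spectrum
    {𝒜 : Type*} [NormedCommRing 𝒜] [StarRing 𝒜] [CStarRing 𝒜]
    [NormedAlgebra ℂ 𝒜] [StarModule ℂ 𝒜] [CompleteSpace 𝒜]
    (A B : 𝒜) (hA : ‖A‖ = 1) (hB : ‖B‖ = 1) (hBpos : ∃ C : 𝒜, B = star C * C) :
    (∀ l : ℂ, ‖A + l • B‖ ^ 2 = 1 + ‖l‖ ^ 2) ↔
      ({p : ℂ × ℝ | ∃ φ : WeakDual.characterSpace ℂ 𝒜, p = (φ A, (φ B).re)} ⊆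
          {p : ℂ × ℝ | ‖p.1‖ ^ 2 + p.2 ^ 2 ≤ 1 ∧ 0 ≤ p.2} ∧
        {p : ℂ × ℝ | ‖p.1‖ ^ 2 + p.2 ^ 2 = 1 ∧ 0 ≤ p.2} ⊆
          {p : ℂ × ℝ | ∃ φ : WeakDual.characterSpace ℂ 𝒜, p = (φ A, (φ B).re)}) :=
  pythagoras_orthogonal_commutative_iff_joint_spectrum_general A B hA hBpos
end

section
/- Let n ≥ 1 and let A, B ∈ Mₙ(ℂ) be nonzero commuting normal matrices (AB = BA, A*A = AA*, B*B = BB*). Then A and B are not Pythagoras orthogonal: there exists λ ∈ ℂ such that ‖A + λB‖² ≠ ‖A‖² + |λ|²‖B‖², where ‖·‖ is the operator norm induced by the Euclidean norm on ℂⁿ. -/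
open scoped Matrix.Norms.L2Operator Matrix

/-!
For every `λ`, the matrix `A + λB` is normal (Fuglede), so its norm is its spectral radius and is
attained at an eigenvalue `a + λb`, where `(a, b)` is a joint eigenvalue pair of `A` and `B`
(an eigenvector of `B` inside an eigenspace of `A + λB`); conversely `|a + λb| ≤ ‖A + λB‖` for every
such pair. Rotating `λ` so that `|a + λb| = |a| + |λ||b|`, Pythagoras orthogonality would make the
strictly convex function `R ↦ √(‖A‖² + R²‖B‖²)` on `R > 0` the upper envelope of the finitely many
affine functions `R ↦ |a| + R|b|`, each lying below it. An affine minorant of a strictly convex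
function touches it at most once, yet every `R > 0` is a touching point: pigeonhole.
-/

namespace Module.End

variable {K V : Type*} [Field K] [AddCommGroup V] [Module K V]

def jointEigenvalues (f g : End K V) : Set (K × K) :=
  {p | ∃ x, f.HasEigenvector p.1 x ∧ g.HasEigenvector p.2 x}

theorem finite_jointEigenvalues [FiniteDimensional K V] (f g : End K V) :
    (jointEigenvalues f g).Finite :=
  (f.finite_hasEigenvalue.prod g.finite_hasEigenvalue).subset
    fun _ ⟨_, hf, hg⟩ => ⟨hasEigenvalue_of_hasEigenvector hf, hasEigenvalue_of_hasEigenvector hg⟩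

theorem hasEigenvalue_add_smul_of_mem_jointEigenvalues {f g : End K V} {p : K × K}
    (hp : p ∈ jointEigenvalues f g) (c : K) : (f + c • g).HasEigenvalue (p.1 + c * p.2) := by
  obtain ⟨x, hf, hg⟩ := hp
  refine hasEigenvalue_of_hasEigenvector (x := x) ⟨?_, hf.2⟩
  rw [mem_eigenspace_iff, LinearMap.add_apply, LinearMap.smul_apply, hf.apply_eq_smul,
    hg.apply_eq_smul, add_smul, mul_smul]

theorem exists_hasEigenvector_of_commute [IsAlgClosed K] [FiniteDimensional K V] {f g : End K V}
    (h : Commute f g) {μ : K} (hμ : f.HasEigenvalue μ) :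
    ∃ ν x, f.HasEigenvector μ x ∧ g.HasEigenvector ν x := by
  have : Nontrivial (f.eigenspace μ) := Submodule.nontrivial_iff_ne_bot.mpr hμ
  obtain ⟨ν, hν⟩ := exists_eigenvalue (g.restrict (mapsTo_genEigenspace_of_comm h μ 1))
  obtain ⟨y, hy, hy0⟩ := hν.exists_hasEigenvector
  refine ⟨ν, y, ⟨y.2, by simpa using hy0⟩, ⟨?_, by simpa using hy0⟩⟩
  exact eigenspace_restrict_le_eigenspace g _ ν ⟨y, hy, rfl⟩

theorem exists_mem_jointEigenvalues_of_hasEigenvalue_add_smul [IsAlgClosed K]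
    [FiniteDimensional K V] {f g : End K V} (h : Commute f g) {c μ : K}
    (hμ : (f + c • g).HasEigenvalue μ) : ∃ p ∈ jointEigenvalues f g, p.1 + c * p.2 = μ := by
  obtain ⟨ν, x, hT, hg⟩ := exists_hasEigenvector_of_commute
    (h.add_left ((Commute.refl g).smul_left c)) hμ
  refine ⟨(μ - c * ν, ν), ⟨x, ⟨?_, hg.2⟩, hg⟩, by ring⟩
  have := hT.apply_eq_smul
  rw [LinearMap.add_apply, LinearMap.smul_apply, hg.apply_eq_smul] at this
  rw [mem_eigenspace_iff, sub_smul, mul_smul, ← this, add_sub_cancel_right]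

end Module.End

theorem IsStarNormal.add_of_commute {A : Type*} [NonUnitalCStarAlgebra A] {a b : A}
    (ha : IsStarNormal a) (hb : IsStarNormal b) (h : Commute a b) : IsStarNormal (a + b) where
  star_comm_self := by
    rw [star_add]
    exact (ha.star_comm_self.add_right (ha.commute_star_left h)).add_left
      ((hb.commute_star_left h.symm).add_right hb.star_comm_self)

theorem IsStarNormal.exists_mem_spectrum_norm_eq {A : Type*} [CStarAlgebra A] [Nontrivial A]
    (a : A) [IsStarNormal a] : ∃ z ∈ spectrum ℂ a, ‖z‖ = ‖a‖ := by
  obtain ⟨z, hz, h⟩ := spectrum.exists_nnnorm_eq_spectralRadius a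
  rw [IsStarNormal.spectralRadius_eq_nnnorm, ENNReal.coe_inj] at h
  exact ⟨z, hz, congrArg NNReal.toReal h⟩

namespace Matrix

open Module.End

variable {m : Type*} [Fintype m] [DecidableEq m] [Nonempty m]

theorem norm_le_norm_add_smul_of_mem_jointEigenvalues {A B : Matrix m m ℂ} {p : ℂ × ℂ}
    (hp : p ∈ jointEigenvalues A.toLin' B.toLin') (c : ℂ) : ‖p.1 + c * p.2‖ ≤ ‖A + c • B‖ := by
  apply spectrum.norm_le_norm_of_mem
  rw [← spectrum_toLin', ← hasEigenvalue_iff_mem_spectrum, map_add, map_smul]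
  exact hasEigenvalue_add_smul_of_mem_jointEigenvalues hp c

theorem exists_mem_jointEigenvalues_norm_add_smul_eq {A B : Matrix m m ℂ} (hA : IsStarNormal A)
    (hB : IsStarNormal B) (h : Commute A B) (c : ℂ) :
    ∃ p ∈ jointEigenvalues A.toLin' B.toLin', ‖A + c • B‖ = ‖p.1 + c * p.2‖ := by
  have := hA.add_of_commute (hB.smul c) (h.smul_right c)
  obtain ⟨μ, hμ, hnorm⟩ := IsStarNormal.exists_mem_spectrum_norm_eq (A + c • B)
  rw [← spectrum_toLin', ← hasEigenvalue_iff_mem_spectrum, map_add, map_smul] at hμ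
  obtain ⟨p, hp, rfl⟩ :=
    exists_mem_jointEigenvalues_of_hasEigenvalue_add_smul (h.map toLinAlgEquiv') hμ
  exact ⟨p, hp, hnorm.symm⟩

end Matrix

theorem Complex.exists_norm_eq_norm_add_mul_eq (a b : ℂ) {R : ℝ} (hR : 0 ≤ R) :
    ∃ l : ℂ, ‖l‖ = R ∧ ‖a + l * b‖ = ‖a‖ + R * ‖b‖ := by
  set u := exp ((arg a - arg b : ℝ) * I)
  have hrot : u * exp (arg b * I) = exp (arg a * I) := by
    rw [← exp_add]; congr 1; push_cast; ring
  have hab : a + R * u * b = ((‖a‖ + R * ‖b‖ : ℝ) : ℂ) * exp (arg a * I) := by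
    push_cast
    linear_combination (-1 : ℂ) * norm_mul_exp_arg_mul_I a - R * u * norm_mul_exp_arg_mul_I b
      + R * ‖b‖ * hrot
  refine ⟨R * u, ?_, ?_⟩
  · rw [norm_mul, norm_exp_ofReal_mul_I, mul_one, Complex.norm_real, Real.norm_of_nonneg hR]
  · rw [hab, norm_mul, norm_exp_ofReal_mul_I, mul_one, Complex.norm_real,
      Real.norm_of_nonneg (by positivity)]

theorem Real.two_mul_sqrt_midpoint_lt {α β R₁ R₂ : ℝ} (hα : α ≠ 0) (hβ : β ≠ 0) (hR : R₁ ≠ R₂) :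
    2 * √(α ^ 2 + ((R₁ + R₂) / 2) ^ 2 * β ^ 2)
      < √(α ^ 2 + R₁ ^ 2 * β ^ 2) + √(α ^ 2 + R₂ ^ 2 * β ^ 2) := by
  set s₁ := √(α ^ 2 + R₁ ^ 2 * β ^ 2)
  set s₂ := √(α ^ 2 + R₂ ^ 2 * β ^ 2)
  have hs₁ : s₁ ^ 2 = α ^ 2 + R₁ ^ 2 * β ^ 2 := Real.sq_sqrt (by positivity)
  have hs₂ : s₂ ^ 2 = α ^ 2 + R₂ ^ 2 * β ^ 2 := Real.sq_sqrt (by positivity)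
  -- Lagrange's identity: `s₁² s₂² = (α² + R₁R₂β²)² + α²β²(R₁ - R₂)²`
  have hprod : α ^ 2 + R₁ * R₂ * β ^ 2 < s₁ * s₂ := by
    rw [← Real.sqrt_mul (by positivity)]
    refine Real.lt_sqrt_of_sq_lt ?_
    have : 0 < α ^ 2 * β ^ 2 * (R₁ - R₂) ^ 2 := by
      have := sub_ne_zero.mpr hR
      positivity
    nlinarith
  refine lt_of_pow_lt_pow_left₀ 2 (by positivity) ?_
  rw [mul_pow, Real.sq_sqrt (by positivity)]
  nlinarith

theorem eq_of_affine_le_of_le_affine {g : ℝ → ℝ}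
    (hg : ∀ R₁ R₂, R₁ ≠ R₂ → 2 * g ((R₁ + R₂) / 2) < g R₁ + g R₂) {u v : ℝ}
    (hle : ∀ R, 0 < R → u + R * v ≤ g R) {R₁ R₂ : ℝ} (h₁ : 0 < R₁) (h₂ : 0 < R₂)
    (hge₁ : g R₁ ≤ u + R₁ * v) (hge₂ : g R₂ ≤ u + R₂ * v) : R₁ = R₂ := by
  by_contra hne
  have := hle ((R₁ + R₂) / 2) (by positivity)
  have := hg R₁ R₂ hne
  linarith

theorem not_forall_exists_le_affine_of_finite {ι : Type*} {s : Set ι} (hs : s.Finite)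
    {g : ℝ → ℝ} (hg : ∀ R₁ R₂, R₁ ≠ R₂ → 2 * g ((R₁ + R₂) / 2) < g R₁ + g R₂) (u v : ι → ℝ)
    (hle : ∀ i ∈ s, ∀ R, 0 < R → u i + R * v i ≤ g R) :
    ¬ ∀ R, 0 < R → ∃ i ∈ s, g R ≤ u i + R * v i := by
  intro hge
  have : Nonempty ι := ⟨(hge 1 one_pos).choose⟩
  choose! i hi hgi using hge
  obtain ⟨R₁, h₁, R₂, h₂, hne, heq⟩ :=
    (Set.Ioi_infinite (0 : ℝ)).exists_ne_map_eq_of_mapsTo (fun R hR => hi R hR) hs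
  exact hne <| eq_of_affine_le_of_le_affine hg (hle _ (hi R₁ h₁)) h₁ h₂ (hgi R₁ h₁)
    (heq ▸ hgi R₂ h₂)

/-- Nonzero commuting normal matrices `A, B ∈ Mₙ(ℂ)` are never Pythagoras orthogonal. -/
theorem commuting_normal_not_pythagoras_orthogonal
    {n : ℕ} (hn : 1 ≤ n) (A B : Matrix (Fin n) (Fin n) ℂ)
    (hA0 : A ≠ 0) (hB0 : B ≠ 0)
    (hcomm : A * B = B * A)
    (hAnormal : Aᴴ * A = A * Aᴴ) (hBnormal : Bᴴ * B = B * Bᴴ) :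
    ∃ l : ℂ, ‖A + l • B‖ ^ 2 ≠ ‖A‖ ^ 2 + ‖l‖ ^ 2 * ‖B‖ ^ 2 := by
  by_contra! hpyth
  have : Nonempty (Fin n) := ⟨⟨0, hn⟩⟩
  set g : ℝ → ℝ := fun R => √(‖A‖ ^ 2 + R ^ 2 * ‖B‖ ^ 2)
  have hnorm (l : ℂ) : ‖A + l • B‖ = g ‖l‖ :=
    (Real.sqrt_sq (norm_nonneg _)).symm.trans (congrArg Real.sqrt (hpyth l))
  refine not_forall_exists_le_affine_of_finite
    (Module.End.finite_jointEigenvalues A.toLin' B.toLin') (g := g)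
    (fun _ _ hR => Real.two_mul_sqrt_midpoint_lt (norm_ne_zero_iff.mpr hA0)
      (norm_ne_zero_iff.mpr hB0) hR) (fun p : ℂ × ℂ => ‖p.1‖) (fun p => ‖p.2‖) ?_ ?_
  · intro p hp R hR
    obtain ⟨l, hl, hal⟩ := Complex.exists_norm_eq_norm_add_mul_eq p.1 p.2 hR.le
    rw [← hal, ← hl, ← hnorm]
    exact Matrix.norm_le_norm_add_smul_of_mem_jointEigenvalues hp l
  · intro R hR
    obtain ⟨p, hp, hpnorm⟩ :=
      Matrix.exists_mem_jointEigenvalues_norm_add_smul_eq ⟨hAnormal⟩ ⟨hBnormal⟩ hcomm R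
    have hR' : ‖(R : ℂ)‖ = R := by rw [Complex.norm_real, Real.norm_of_nonneg hR.le]
    refine ⟨p, hp, ?_⟩
    calc g R = ‖A + (R : ℂ) • B‖ := by rw [hnorm, hR']
      _ = ‖p.1 + R * p.2‖ := hpnorm
      _ ≤ ‖p.1‖ + ‖(R : ℂ) * p.2‖ := norm_add_le _ _
      _ = ‖p.1‖ + R * ‖p.2‖ := by rw [norm_mul, hR']
end

section
/- Let H be a complex Hilbert space and A, B ∈ B(H) with ‖A‖ = 1 = ‖B‖. Let V = {(ω(I − A*A), ω(I − B*B), ω(B*A)) : ω a state on B(H)} (the first two entries are nonnegative real numbers since I − A*A and I − B*B are positive; regard V ⊆ ℝ × ℝ × ℂ). Then ‖A + λB‖² = 1 + |λ|² holds for all λ ∈ ℂ if and only if (i) V is contained in the cone 𝒞 = {(x, y, z) ∈ ℝ × ℝ × ℂ : 0 ≤ x ≤ 1, 0 ≤ y ≤ 1, |z| ≤ √(xy)}, and (ii) for every w ∈ ℂ with |w| = 1 and every s, t ∈ (0, ∞) there exists r ≥ 0 such that (rs, rt, rw√(st)) ∈ V. -/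
/-!
For a state `ω` put `x = ω(I - A*A)`, `y = ω(I - B*B)`, `z = ω(B*A)`. Expanding,
`ω((A + λB)*(A + λB)) = 1 - x + 2 Re(conj λ z) + |λ|²(1 - y)`, and `‖T‖²` is the largest value of
`ω(T*T)` over states: vector states approach it, and a weak-* cluster point (Banach–Alaoglu)
attains it. Hence `‖A + λB‖² ≤ 1 + |λ|²` for all `λ` amounts to `2 Re(conj λ z) ≤ x + |λ|² y`
for all `λ` and all states, i.e. to the cone condition `|z| ≤ √(xy)`. A state attaining
`‖A + λB‖² = 1 + c²` at `λ = c w`, `c = √(s/t)`, forces equality in AM-GM: `x = c² y` and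
`z = c y w`, a point of `V` on the ray through `(s, t, w√(st))`. Conversely a point
`r (|λ|², 1, λ|λ|)` of `V` comes from a state with `ω((A + λB)*(A + λB)) = 1 + |λ|²`.
-/

open scoped ComplexOrder
open ComplexConjugate

lemma ContinuousLinearMap.sq_opNorm_le_of_unit_norm {E F : Type*} [NormedAddCommGroup E]
    [NormedSpace ℂ E] [NormedAddCommGroup F] [NormedSpace ℂ F] {T : E →L[ℂ] F} {M : ℝ}
    (hM : 0 ≤ M) (h : ∀ u, ‖u‖ = 1 → ‖T u‖ ^ 2 ≤ M) : ‖T‖ ^ 2 ≤ M :=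
  (Real.le_sqrt (norm_nonneg T) hM).mp <| T.opNorm_le_of_unit_norm (Real.sqrt_nonneg M)
    fun u hu => Real.le_sqrt_of_sq_le (h u hu)

lemma re_conj_ofReal_mul_mul_self (s : ℝ) (z : ℂ) : (conj (s * z) * z).re = s * ‖z‖ ^ 2 := by
  rw [map_mul, Complex.conj_ofReal, mul_assoc, Complex.re_ofReal_mul, Complex.conj_mul',
    ← Complex.ofReal_pow, Complex.ofReal_re]

lemma two_mul_re_conj_mul_le_of_norm_le_sqrt {x y : ℝ} (hx : 0 ≤ x) (hy : 0 ≤ y) {z : ℂ}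
    (hz : ‖z‖ ≤ √(x * y)) (l : ℂ) : 2 * (conj l * z).re ≤ x + ‖l‖ ^ 2 * y := by
  have hre : (conj l * z).re ≤ ‖l‖ * ‖z‖ := by
    simpa only [norm_mul, Complex.norm_conj] using Complex.re_le_norm (conj l * z)
  have hamgm := two_mul_le_add_sq (√x) (‖l‖ * √y)
  rw [Real.sqrt_mul hx] at hz
  rw [Real.sq_sqrt hx, mul_pow, Real.sq_sqrt hy] at hamgm
  nlinarith [norm_nonneg l]

lemma norm_le_sqrt_mul_of_forall_two_mul_re_le {x y : ℝ} (hx : 0 ≤ x) (hy : 0 ≤ y) {z : ℂ}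
    (h : ∀ l : ℂ, 2 * (conj l * z).re ≤ x + ‖l‖ ^ 2 * y) : ‖z‖ ≤ √(x * y) := by
  have hquad : ∀ s : ℝ, 0 ≤ (‖z‖ ^ 2 * y) * (s * s) + (-2 * ‖z‖ ^ 2) * s + x := fun s => by
    have := h (s * z)
    rw [re_conj_ofReal_mul_mul_self, norm_mul, Complex.norm_real, Real.norm_eq_abs, mul_pow,
      sq_abs] at this
    linarith
  have hdisc := discrim_le_zero hquad
  rw [discrim] at hdisc
  rw [Real.le_sqrt (norm_nonneg z) (by positivity)]
  rcases (sq_nonneg ‖z‖).eq_or_lt with hz | hz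
  · rw [← hz]; positivity
  · nlinarith

lemma eq_of_add_le_two_mul_re_conj_mul {x y c : ℝ} {w z : ℂ} (hx : 0 ≤ x) (hy : 0 ≤ y)
    (hc : 0 < c) (hw : ‖w‖ = 1) (hz : ‖z‖ ≤ √(x * y))
    (h : x + c ^ 2 * y ≤ 2 * (conj (c * w) * z).re) : x = c ^ 2 * y ∧ z = (c * y : ℝ) * w := by
  set ζ := conj w * z with hζ
  have hζnorm : ‖ζ‖ = ‖z‖ := by rw [norm_mul, Complex.norm_conj, hw, one_mul]
  have hre : (conj (c * w) * z).re = c * ζ.re := by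
    rw [map_mul, Complex.conj_ofReal, mul_assoc, Complex.re_ofReal_mul]
  have hζre := Complex.re_le_norm ζ
  rw [Real.sqrt_mul hx] at hz
  have hle : x + c ^ 2 * y ≤ 2 * √x * (c * √y) := by
    rw [hre] at h
    rw [← hζnorm] at hz
    nlinarith
  have hsqrt : √x = c * √y := by
    have hsq : (√x - c * √y) ^ 2 = 0 :=
      le_antisymm (by nlinarith [Real.sq_sqrt hx, Real.sq_sqrt hy]) (sq_nonneg _)
    exact sub_eq_zero.mp (pow_eq_zero_iff two_ne_zero |>.mp hsq)
  have hxy : x = c ^ 2 * y := by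
    rw [← Real.sq_sqrt hx, hsqrt, mul_pow, Real.sq_sqrt hy]
  have hζle : ‖ζ‖ ≤ c * y := by
    rw [hζnorm, ← Real.mul_self_sqrt hy, ← mul_assoc, ← hsqrt]
    exact hz
  have hleζ : c * y ≤ ζ.re := by
    rw [hxy, hre] at h
    exact le_of_mul_le_mul_left (by linarith) hc
  have hζeq : ζ = (c * y : ℝ) := by
    rw [← le_antisymm hζle (hleζ.trans hζre)]
    exact Complex.eq_coe_norm_of_nonneg (Complex.re_eq_norm.mp (by linarith))
  refine ⟨hxy, ?_⟩
  rw [← hζeq, hζ, mul_comm, ← mul_assoc, Complex.mul_conj', hw, Complex.ofReal_one, one_pow,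
    one_mul]

section State

variable {𝔄 : Type*} [CStarAlgebra 𝔄] [PartialOrder 𝔄] [StarOrderedRing 𝔄]

structure IsState (ω : 𝔄 →ₗ[ℂ] ℂ) : Prop where
  nonneg_star_mul_self : ∀ T, 0 ≤ ω (star T * T)
  map_one : ω 1 = 1

namespace IsState

variable {ω : 𝔄 →ₗ[ℂ] ℂ}

noncomputable def toPositiveLinearMap (hω : IsState ω) : 𝔄 →ₚ[ℂ] ℂ :=
  PositiveLinearMap.mk₀ ω fun _ hP => by
    obtain ⟨C, rfl⟩ := CStarAlgebra.nonneg_iff_eq_star_mul_self.mp hP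
    exact hω.nonneg_star_mul_self C

lemma map_star (hω : IsState ω) (S : 𝔄) : ω (star S) = conj (ω S) :=
  StarHomClass.map_star hω.toPositiveLinearMap S

lemma re_apply_star_mul_self_le (hω : IsState ω) (T : 𝔄) : (ω (star T * T)).re ≤ ‖T‖ ^ 2 := by
  have h := hω.toPositiveLinearMap.norm_apply_le_of_nonneg _ (star_mul_self_nonneg T)
  change ‖ω (star T * T)‖ ≤ ‖ω 1‖ * _ at h
  rw [hω.map_one, norm_one, one_mul, CStarRing.norm_star_mul_self, ← sq] at h
  exact (Complex.re_le_norm _).trans h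

lemma re_apply_one_sub_star_mul_self_mem_Icc (hω : IsState ω) {A : 𝔄} (hA : ‖A‖ ≤ 1) :
    (ω (1 - star A * A)).re ∈ Set.Icc 0 1 := by
  have hle : star A * A ≤ 1 := by
    rwa [← CStarAlgebra.norm_le_one_iff_of_nonneg _ (star_mul_self_nonneg A),
      CStarRing.norm_star_mul_self, ← sq, sq_le_one_iff₀ (norm_nonneg A)]
  have h1 := (Complex.le_def.mp (hω.toPositiveLinearMap.map_nonneg (sub_nonneg.mpr hle))).1
  have h2 := (Complex.le_def.mp (hω.nonneg_star_mul_self A)).1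
  change 0 ≤ (ω (1 - star A * A)).re at h1
  rw [map_sub, hω.map_one] at h1 ⊢
  simp only [Complex.zero_re, Complex.sub_re, Complex.one_re] at h1 h2 ⊢
  constructor <;> linarith

lemma re_apply_star_mul_self_add_smul (hω : IsState ω) (A B : 𝔄) (l : ℂ) :
    (ω (star (A + l • B) * (A + l • B))).re =
      1 - (ω (1 - star A * A)).re + 2 * (conj l * ω (star B * A)).re +
        ‖l‖ ^ 2 * (1 - (ω (1 - star B * B)).re) := by
  have hexpand : star (A + l • B) * (A + l • B) = star A * A + l • star (star B * A) +
      conj l • (star B * A) + (conj l * l) • (star B * B) := by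
    simp only [star_add, star_smul, star_mul, star_star, add_mul, mul_add, smul_mul_assoc,
      mul_smul_comm, Complex.star_def]
    module
  rw [hexpand, ← Complex.normSq_eq_conj_mul_self, Complex.normSq_eq_norm_sq]
  simp only [map_add, map_smul, map_sub, hω.map_star, hω.map_one, smul_eq_mul, Complex.add_re,
    Complex.sub_re, Complex.one_re, Complex.mul_re, Complex.conj_re, Complex.conj_im,
    Complex.ofReal_re, Complex.ofReal_im]
  ring

lemma two_mul_re_conj_mul_le (hω : IsState ω) {A B : 𝔄}
    (hle : ∀ l : ℂ, ‖A + l • B‖ ^ 2 ≤ 1 + ‖l‖ ^ 2) (l : ℂ) :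
    2 * (conj l * ω (star B * A)).re ≤
      (ω (1 - star A * A)).re + ‖l‖ ^ 2 * (ω (1 - star B * B)).re := by
  have h := (hω.re_apply_star_mul_self_le (A + l • B)).trans (hle l)
  rw [hω.re_apply_star_mul_self_add_smul] at h
  linarith

lemma norm_apply_star_mul_le_sqrt (hω : IsState ω) {A B : 𝔄} (hA : ‖A‖ ≤ 1) (hB : ‖B‖ ≤ 1)
    (hle : ∀ l : ℂ, ‖A + l • B‖ ^ 2 ≤ 1 + ‖l‖ ^ 2) :
    ‖ω (star B * A)‖ ≤ √((ω (1 - star A * A)).re * (ω (1 - star B * B)).re) :=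
  norm_le_sqrt_mul_of_forall_two_mul_re_le (hω.re_apply_one_sub_star_mul_self_mem_Icc hA).1
    (hω.re_apply_one_sub_star_mul_self_mem_Icc hB).1 (hω.two_mul_re_conj_mul_le hle)

lemma one_add_sq_le_norm_add_smul_sq (hω : IsState ω) {A B : 𝔄} {r : ℝ} {l : ℂ}
    (hx : (ω (1 - star A * A)).re = r * ‖l‖ ^ 2) (hy : (ω (1 - star B * B)).re = r)
    (hz : ω (star B * A) = r * l) : 1 + ‖l‖ ^ 2 ≤ ‖A + l • B‖ ^ 2 := by
  have h := hω.re_apply_star_mul_self_le (A + l • B)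
  rw [hω.re_apply_star_mul_self_add_smul, hx, hy, hz, mul_left_comm, Complex.conj_mul',
    ← Complex.ofReal_pow, ← Complex.ofReal_mul, Complex.ofReal_re] at h
  linarith

end IsState

lemma one_add_sq_le_norm_add_smul_sq_of_ray {A B : 𝔄} (hA : ‖A‖ = 1)
    (hray : ∀ w : ℂ, ‖w‖ = 1 → ∀ s t : ℝ, 0 < s → 0 < t →
      ∃ r : ℝ, 0 ≤ r ∧ ∃ ω : 𝔄 →ₗ[ℂ] ℂ, IsState ω ∧
        (r * s, r * t, (r : ℂ) * w * (√(s * t) : ℝ)) =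
          ((ω (1 - star A * A)).re, (ω (1 - star B * B)).re, ω (star B * A)))
    (l : ℂ) : 1 + ‖l‖ ^ 2 ≤ ‖A + l • B‖ ^ 2 := by
  rcases eq_or_ne l 0 with rfl | hl
  · simp [hA]
  have hl' : 0 < ‖l‖ := norm_pos_iff.mpr hl
  obtain ⟨r, -, ω, hω, hp⟩ := hray (l / ‖l‖) (by simp [hl'.ne']) (‖l‖ ^ 2) 1 (by positivity)
    one_pos
  simp only [Prod.mk.injEq] at hp
  obtain ⟨hx, hy, hz⟩ := hp
  refine hω.one_add_sq_le_norm_add_smul_sq hx.symm (by rw [← hy, mul_one]) ?_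
  rw [← hz, mul_one, Real.sqrt_sq hl'.le]
  field_simp

end State

section VectorState

variable {H : Type*} [NormedAddCommGroup H] [InnerProductSpace ℂ H]

noncomputable def vectorState (u : H) : StrongDual ℂ (H →L[ℂ] H) :=
  (innerSL ℂ u).comp (ContinuousLinearMap.apply ℂ H u)

lemma vectorState_apply (u : H) (T : H →L[ℂ] H) : vectorState u T = inner ℂ u (T u) := rfl

lemma norm_vectorState_le (u : H) : ‖vectorState u‖ ≤ ‖u‖ ^ 2 :=
  ContinuousLinearMap.opNorm_le_bound _ (by positivity) fun T => by
    rw [vectorState_apply]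
    calc ‖inner ℂ u (T u)‖ ≤ ‖u‖ * (‖T‖ * ‖u‖) :=
          (norm_inner_le_norm _ _).trans (by gcongr; exact T.le_opNorm u)
      _ = ‖u‖ ^ 2 * ‖T‖ := by ring

variable [CompleteSpace H]

lemma vectorState_star_mul_self (u : H) (T : H →L[ℂ] H) :
    vectorState u (star T * T) = (‖T u‖ ^ 2 : ℝ) := by
  rw [vectorState_apply, mul_apply_eq_comp, ContinuousLinearMap.star_eq_adjoint,
    ContinuousLinearMap.adjoint_inner_right, inner_self_eq_norm_sq_to_K]
  norm_cast

lemma isState_vectorState {u : H} (hu : ‖u‖ = 1) :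
    IsState (vectorState u : (H →L[ℂ] H) →ₗ[ℂ] ℂ) where
  nonneg_star_mul_self T := by
    simp only [ContinuousLinearMap.coe_coe, vectorState_star_mul_self]
    exact Complex.zero_le_real.mpr (sq_nonneg _)
  map_one := by
    simp [vectorState_apply, inner_self_eq_norm_sq_to_K, hu]

lemma exists_isState_norm_sq_le [Nontrivial H] (T : H →L[ℂ] H) :
    ∃ ω : (H →L[ℂ] H) →ₗ[ℂ] ℂ, IsState ω ∧ ‖T‖ ^ 2 ≤ (ω (star T * T)).re := by
  let K : Set (WeakDual ℂ (H →L[ℂ] H)) :=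
    WeakDual.toStrongDual ⁻¹' Metric.closedBall 0 1 ∩
      ((⋂ S : H →L[ℂ] H, {φ | 0 ≤ φ (star S * S)}) ∩ {φ | φ 1 = 1})
  have hK : IsCompact K := (WeakDual.isCompact_closedBall 0 1).inter_right <|
    (isClosed_iInter fun S => isClosed_le continuous_const (WeakDual.eval_continuous _)).inter
      (isClosed_eq (WeakDual.eval_continuous _) continuous_const)
  have hvec : ∀ u : H, ‖u‖ = 1 → StrongDual.toWeakDual (vectorState u) ∈ K := fun u hu =>
    ⟨by simpa [hu] using norm_vectorState_le u, Set.mem_iInter.mpr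
      (isState_vectorState hu).nonneg_star_mul_self, (isState_vectorState hu).map_one⟩
  obtain ⟨u, hu⟩ := exists_norm_eq H zero_le_one
  obtain ⟨ω, ⟨-, hωpos, hωone⟩, hmax⟩ := hK.exists_isMaxOn ⟨_, hvec u hu⟩
    (Complex.continuous_re.comp (WeakDual.eval_continuous (star T * T))).continuousOn
  have hω : IsState (WeakDual.toStrongDual ω : (H →L[ℂ] H) →ₗ[ℂ] ℂ) :=
    ⟨Set.mem_iInter.mp hωpos, hωone⟩
  refine ⟨_, hω, ContinuousLinearMap.sq_opNorm_le_of_unit_norm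
    (Complex.le_def.mp (hω.nonneg_star_mul_self T)).1 fun v hv => ?_⟩
  have hv_le : (vectorState v (star T * T)).re ≤ (ω (star T * T)).re := hmax (hvec v hv)
  rwa [vectorState_star_mul_self, Complex.ofReal_re] at hv_le

end VectorState

section Pythagoras

variable {H : Type*} [NormedAddCommGroup H] [InnerProductSpace ℂ H] [CompleteSpace H]
  {A B : H →L[ℂ] H}

lemma exists_isState_on_ray_of_pythagoras [Nontrivial H] (hA : ‖A‖ ≤ 1) (hB : ‖B‖ ≤ 1)
    (hpy : ∀ l : ℂ, ‖A + l • B‖ ^ 2 = 1 + ‖l‖ ^ 2) {w : ℂ} (hw : ‖w‖ = 1) {s t : ℝ}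
    (hs : 0 < s) (ht : 0 < t) :
    ∃ r : ℝ, 0 ≤ r ∧ ∃ ω : (H →L[ℂ] H) →ₗ[ℂ] ℂ, IsState ω ∧
      (r * s, r * t, (r : ℂ) * w * (√(s * t) : ℝ)) =
        ((ω (1 - star A * A)).re, (ω (1 - star B * B)).re, ω (star B * A)) := by
  set c := √(s / t)
  have hc : 0 < c := Real.sqrt_pos.mpr (div_pos hs ht)
  have hl : ‖(c : ℂ) * w‖ = c := by rw [norm_mul, Complex.norm_of_nonneg hc.le, hw, mul_one]
  obtain ⟨ω, hω, hattain⟩ := exists_isState_norm_sq_le (A + ((c : ℂ) * w) • B)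
  obtain ⟨hx, -⟩ := hω.re_apply_one_sub_star_mul_self_mem_Icc hA
  obtain ⟨hy, -⟩ := hω.re_apply_one_sub_star_mul_self_mem_Icc hB
  have hge := hω.re_apply_star_mul_self_add_smul A B ((c : ℂ) * w)
  rw [hpy, hl] at hattain
  rw [hl] at hge
  obtain ⟨hxy, hz⟩ := eq_of_add_le_two_mul_re_conj_mul hx hy hc hw
    (hω.norm_apply_star_mul_le_sqrt hA hB fun l => (hpy l).le) (by linarith)
  have hst : √(s * t) = c * t := by
    rw [show s * t = s / t * t ^ 2 by field_simp, Real.sqrt_mul' _ (sq_nonneg t),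
      Real.sqrt_sq ht.le]
  refine ⟨(ω (1 - star B * B)).re / t, by positivity, ω, hω, ?_⟩
  rw [hxy, hz, hst, Real.sq_sqrt (div_pos hs ht).le]
  ext <;> simp only [Complex.ofReal_mul, Complex.ofReal_div] <;> field_simp

lemma norm_add_smul_sq_le_of_forall_isState (hA : ‖A‖ ≤ 1) (hB : ‖B‖ ≤ 1)
    (hcone : ∀ ω : (H →L[ℂ] H) →ₗ[ℂ] ℂ, IsState ω →
      ‖ω (star B * A)‖ ≤ √((ω (1 - star A * A)).re * (ω (1 - star B * B)).re))
    (l : ℂ) : ‖A + l • B‖ ^ 2 ≤ 1 + ‖l‖ ^ 2 := by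
  refine ContinuousLinearMap.sq_opNorm_le_of_unit_norm (by positivity) fun u hu => ?_
  have hω := isState_vectorState hu
  have h := hω.re_apply_star_mul_self_add_smul A B l
  rw [ContinuousLinearMap.coe_coe, vectorState_star_mul_self, Complex.ofReal_re] at h
  have := two_mul_re_conj_mul_le_of_norm_le_sqrt
    (hω.re_apply_one_sub_star_mul_self_mem_Icc hA).1
    (hω.re_apply_one_sub_star_mul_self_mem_Icc hB).1 (hcone _ hω) l
  rw [ContinuousLinearMap.coe_coe] at this
  linarith

end Pythagoras

/-- Characterization of Pythagoras orthogonality of norm-one operators `A, B ∈ B(H)` in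
terms of the joint algebraic numerical range `V = V(I − A*A, I − B*B, B*A)`:
`A ⊥_P B` iff `V` lies in the cone `{(x,y,z) : 0 ≤ x ≤ 1, 0 ≤ y ≤ 1, |z| ≤ √(xy)}` and
`V` meets every closed ray from `0` in the direction `(s, t, w√(st))` with `s, t > 0`,
`|w| = 1`. -/
theorem pythagoras_orthogonal_iff_numerical_range
    {H : Type*} [NormedAddCommGroup H] [InnerProductSpace ℂ H] [CompleteSpace H]
    (A B : H →L[ℂ] H) (hA : ‖A‖ = 1) (hB : ‖B‖ = 1) :
    (∀ l : ℂ, ‖A + l • B‖ ^ 2 = 1 + ‖l‖ ^ 2) ↔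
      (({p : ℝ × ℝ × ℂ | ∃ ω : (H →L[ℂ] H) →ₗ[ℂ] ℂ,
            (∀ T : H →L[ℂ] H, 0 ≤ ω (star T * T)) ∧ ω 1 = 1 ∧
            p = ((ω (1 - star A * A)).re, (ω (1 - star B * B)).re, ω (star B * A))} ⊆
          {p : ℝ × ℝ × ℂ | 0 ≤ p.1 ∧ p.1 ≤ 1 ∧ 0 ≤ p.2.1 ∧ p.2.1 ≤ 1 ∧
            ‖p.2.2‖ ≤ Real.sqrt (p.1 * p.2.1)}) ∧
        ∀ w : ℂ, ‖w‖ = 1 → ∀ s t : ℝ, 0 < s → 0 < t →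
          ∃ r : ℝ, 0 ≤ r ∧
            (r * s, r * t, (r : ℂ) * w * (Real.sqrt (s * t) : ℝ)) ∈
              {p : ℝ × ℝ × ℂ | ∃ ω : (H →L[ℂ] H) →ₗ[ℂ] ℂ,
                (∀ T : H →L[ℂ] H, 0 ≤ ω (star T * T)) ∧ ω 1 = 1 ∧
                p = ((ω (1 - star A * A)).re, (ω (1 - star B * B)).re,
                  ω (star B * A))}) := by
  have : Nontrivial H := by
    rcases subsingleton_or_nontrivial H with h | h
    · simp [Subsingleton.elim A 0] at hA
    · exact h
  constructor
  · intro hpy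
    refine ⟨?_, fun w hw s t hs ht => ?_⟩
    · rintro _ ⟨ω, hpos, hone, rfl⟩
      have hω : IsState ω := ⟨hpos, hone⟩
      obtain ⟨hx₀, hx₁⟩ := hω.re_apply_one_sub_star_mul_self_mem_Icc hA.le
      obtain ⟨hy₀, hy₁⟩ := hω.re_apply_one_sub_star_mul_self_mem_Icc hB.le
      exact ⟨hx₀, hx₁, hy₀, hy₁, hω.norm_apply_star_mul_le_sqrt hA.le hB.le fun l => (hpy l).le⟩
    · obtain ⟨r, hr, ω, hω, hp⟩ := exists_isState_on_ray_of_pythagoras hA.le hB.le hpy hw hs ht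
      exact ⟨r, hr, ω, hω.1, hω.2, hp⟩
  · rintro ⟨hcone, hray⟩ l
    refine le_antisymm (norm_add_smul_sq_le_of_forall_isState hA.le hB.le
      (fun ω hω => (hcone ⟨ω, hω.1, hω.2, rfl⟩).2.2.2.2) l) ?_
    refine one_add_sq_le_norm_add_smul_sq_of_ray hA (fun w hw s t hs ht => ?_) l
    obtain ⟨r, hr, ω, hpos, hone, hp⟩ := hray w hw s t hs ht
    exact ⟨r, hr, ω, ⟨hpos, hone⟩, hp⟩
end

section
/- Let K be a complex Hilbert space and let C₀, …, C_m ∈ B(K) satisfy Σ_{j=0}^m CⱼCⱼ* ≤ I in the Loewner order. If ω is a state on B(K) such that ω(Cⱼ*Cⱼ) = 1 for all j = 0, …, m, then ω(Cₖ*Cⱼ) = 0 whenever k ≠ j. -/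
/-!
Compressing `∑ Cᵢ Cᵢ* ≤ 1` by `Cⱼ` gives `∑ᵢ ω(Yᵢ* Yᵢ) ≤ ω(Cⱼ* Cⱼ) = 1` with `Yᵢ = Cᵢ* Cⱼ`.
By Cauchy–Schwarz for the positive functional `ω`, `|ω(Yᵢ)|² ≤ ω(Yᵢ* Yᵢ)`; since `ω(Yⱼ) = 1`,
the `j`-th term alone is at least `1`, so every other term vanishes, and with it `ω(Yₖ)`.
-/

open scoped ComplexOrder

theorem Finset.eq_zero_of_sum_le_of_nonneg {ι M : Type*} [AddCommMonoid M] [PartialOrder M]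
    [IsOrderedCancelAddMonoid M] {s : Finset ι} {t : ι → M} (ht : ∀ i ∈ s, 0 ≤ t i)
    {j k : ι} (hj : j ∈ s) (hk : k ∈ s) (hkj : k ≠ j) (hle : ∑ i ∈ s, t i ≤ t j) : t k = 0 := by
  classical
  rw [← Finset.add_sum_erase s t hj] at hle
  have hrest : ∑ i ∈ s.erase j, t i = 0 :=
    le_antisymm (by simpa using hle)
      (Finset.sum_nonneg fun i hi => ht i (Finset.mem_of_mem_erase hi))
  exact (Finset.sum_eq_zero_iff_of_nonneg fun i hi => ht i (Finset.mem_of_mem_erase hi)).mp hrest k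
    (Finset.mem_erase.mpr ⟨hkj, hk⟩)

namespace PositiveLinearMap

section StarOrdered

variable {A : Type*} [NonUnitalRing A] [PartialOrder A] [StarRing A] [StarOrderedRing A]
  [Module ℂ A]

def ofNonnegStarMulSelf (ω : A →ₗ[ℂ] ℂ) (hω : ∀ a, 0 ≤ ω (star a * a)) : A →ₚ[ℂ] ℂ :=
  mk₀ ω fun x hx => by
    rw [StarOrderedRing.nonneg_iff] at hx
    induction hx using AddSubmonoid.closure_induction with
    | mem _ h => obtain ⟨a, rfl⟩ := h; exact hω a
    | zero => simp
    | add _ _ _ _ ha hb => rw [map_add]; exact add_nonneg ha hb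

end StarOrdered

section CStar

variable {A : Type*} [NonUnitalCStarAlgebra A] [PartialOrder A] [StarOrderedRing A]

lemma norm_apply_star_mul_sq_le (f : A →ₚ[ℂ] ℂ) (a b : A) :
    ((‖f (star a * b)‖ ^ 2 : ℝ) : ℂ) ≤ f (star a * a) * f (star b * b) := by
  have hcs := norm_inner_le_norm (𝕜 := ℂ) (f.toPreGNS a) (f.toPreGNS b)
  rw [preGNS_inner_def, ofPreGNS_toPreGNS, ofPreGNS_toPreGNS] at hcs
  have hnorm_sq (x : A) : ((‖f.toPreGNS x‖ ^ 2 : ℝ) : ℂ) = f (star x * x) := by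
    simpa using f.preGNS_norm_sq (f.toPreGNS x)
  rw [← hnorm_sq, ← hnorm_sq, ← Complex.ofReal_mul, Complex.real_le_real, ← mul_pow]
  exact pow_le_pow_left₀ (norm_nonneg _) hcs 2

end CStar

section Unital

variable {A : Type*} [CStarAlgebra A] [PartialOrder A] [StarOrderedRing A] (f : A →ₚ[ℂ] ℂ)

lemma norm_apply_sq_le (b : A) : ((‖f b‖ ^ 2 : ℝ) : ℂ) ≤ f 1 * f (star b * b) := by
  simpa using f.norm_apply_star_mul_sq_le 1 b

lemma apply_eq_zero_of_apply_star_mul_self_eq_zero {b : A} (hb : f (star b * b) = 0) :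
    f b = 0 := by
  have hsq : ((‖f b‖ ^ 2 : ℝ) : ℂ) ≤ 0 := by simpa [hb] using f.norm_apply_sq_le b
  rw [← Complex.ofReal_zero, Complex.real_le_real] at hsq
  simpa using hsq

lemma one_le_apply_star_mul_self_of_apply_eq_one (hf : f 1 = 1) {b : A} (hb : f b = 1) :
    1 ≤ f (star b * b) := by
  simpa [hf, hb] using f.norm_apply_sq_le b

theorem apply_star_mul_eq_zero_of_sum_mul_star_le_one {ι : Type*} [Fintype ι] (hf : f 1 = 1)
    {C : ι → A} (hC : ∑ i, C i * star (C i) ≤ 1) {j k : ι} (hj : f (star (C j) * C j) = 1)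
    (hkj : k ≠ j) : f (star (C k) * C j) = 0 := by
  set Y : ι → A := fun i => star (C i) * C j
  have hY_nonneg (i : ι) : 0 ≤ f (star (Y i) * Y i) := f.map_nonneg (star_mul_self_nonneg _)
  have hsum : ∑ i, f (star (Y i) * Y i) ≤ f (star (Y j) * Y j) :=
    calc ∑ i, f (star (Y i) * Y i) = f (star (C j) * (∑ i, C i * star (C i)) * C j) := by
          simp [Y, Finset.mul_sum, Finset.sum_mul, mul_assoc]
      _ ≤ f (star (C j) * 1 * C j) := OrderHomClass.mono f (star_left_conjugate_le_conjugate hC _)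
      _ = 1 := by simpa using hj
      _ ≤ f (star (Y j) * Y j) := f.one_le_apply_star_mul_self_of_apply_eq_one hf hj
  exact f.apply_eq_zero_of_apply_star_mul_self_eq_zero <|
    Finset.eq_zero_of_sum_le_of_nonneg (fun i _ => hY_nonneg i) (Finset.mem_univ j)
      (Finset.mem_univ k) hkj hsum

end Unital

end PositiveLinearMap

/-- If `C₀, …, C_m ∈ B(K)` satisfy `Σ CⱼCⱼ* ≤ I` and `ω` is a state on `B(K)` with
`ω(Cⱼ*Cⱼ) = 1` for all `j`, then `ω(Cₖ*Cⱼ) = 0` for `k ≠ j`. -/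
theorem state_orthogonality_of_column_contraction
    {K : Type*} [NormedAddCommGroup K] [InnerProductSpace ℂ K] [CompleteSpace K]
    (m : ℕ) (C : Fin (m + 1) → K →L[ℂ] K)
    (hcol : ((1 : K →L[ℂ] K) - ∑ j, C j * star (C j)).IsPositive)
    (ω : (K →L[ℂ] K) →ₗ[ℂ] ℂ)
    (hpos : ∀ T : K →L[ℂ] K, 0 ≤ ω (star T * T)) (hone : ω 1 = 1)
    (hnorm : ∀ j, ω (star (C j) * C j) = 1) :
    ∀ j k, j ≠ k → ω (star (C k) * C j) = 0 := by
  intro j k hjk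
  have hC : ∑ i, C i * star (C i) ≤ 1 :=
    sub_nonneg.mp ((ContinuousLinearMap.nonneg_iff_isPositive _).mpr hcol)
  exact PositiveLinearMap.apply_star_mul_eq_zero_of_sum_mul_star_le_one
    (.ofNonnegStarMulSelf ω hpos) hone hC (hnorm j) hjk.symm
end

section
/- Let 𝒜 be a C*-algebra and A, B ∈ 𝒜. Then B*B ≤ A*A (in the Loewner order of 𝒜) if and only if ‖BX‖ ≤ ‖AX‖ for all X ∈ 𝒜. -/
/-!
The forward direction conjugates `B*B ≤ A*A` by `X` and uses `‖BX‖² = ‖X*B*BX‖` together with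
monotonicity of the norm on positive elements. For the converse one passes to the unitization,
where the hypothesis persists because `‖w‖² = ‖B (Y w*)‖` for `w = BY` and `Y w*` lies in `𝒜`.
In a unital algebra, `a ≤ c` for strictly positive `c` means `‖√a c^(-1/2)‖ ≤ 1`, and
`‖√(B*B) X‖ = ‖BX‖`; so the hypothesis gives `B*B ≤ A*A + ε` for every `ε > 0`, and one lets
`ε → 0`.
-/

open CFC

section CStarRing

variable {R : Type*} [NonUnitalNormedRing R] [StarRing R] [CStarRing R]

lemma CStarRing.norm_mul_sq (a x : R) : ‖a * x‖ ^ 2 = ‖star x * (star a * a) * x‖ := by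
  rw [sq, ← CStarRing.norm_star_mul_self, star_mul]
  simp only [mul_assoc]

lemma CStarRing.norm_mul_eq_of_star_mul_self_eq {a b : R} (h : star a * a = star b * b) (x : R) :
    ‖a * x‖ = ‖b * x‖ := by
  rw [← sq_eq_sq₀ (norm_nonneg _) (norm_nonneg _), norm_mul_sq, norm_mul_sq, h]

lemma CStarRing.norm_mul_le_of_norm_mul_mul_star_le {a b y : R}
    (h : ‖b * (y * star (b * y))‖ ≤ ‖a * (y * star (b * y))‖) : ‖b * y‖ ≤ ‖a * y‖ := by
  rcases eq_or_ne (b * y) 0 with hw | hw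
  · simp [hw]
  refine le_of_mul_le_mul_right ?_ (norm_pos_iff.mpr hw)
  calc ‖b * y‖ * ‖b * y‖ = ‖b * (y * star (b * y))‖ := by
        rw [← CStarRing.norm_self_mul_star, mul_assoc]
    _ ≤ ‖a * (y * star (b * y))‖ := h
    _ ≤ ‖a * y‖ * ‖b * y‖ := by
        rw [← mul_assoc, ← norm_star (b * y)]
        exact norm_mul_le _ _

end CStarRing

lemma Unitization.norm_inr_mul_le_norm_inr_mul {A : Type*} [NonUnitalCStarAlgebra A] {a b : A}
    (h : ∀ x : A, ‖b * x‖ ≤ ‖a * x‖) (y : Unitization ℂ A) :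
    ‖(b : Unitization ℂ A) * y‖ ≤ ‖(a : Unitization ℂ A) * y‖ := by
  refine CStarRing.norm_mul_le_of_norm_mul_mul_star_le ?_
  have hfst : (y * star ((b : Unitization ℂ A) * y)).fst = 0 := by simp
  lift y * star ((b : Unitization ℂ A) * y) to A using hfst with z
  simpa only [← Unitization.inr_mul, Unitization.norm_inr] using h z

section NonUnital

variable {A : Type*} [NonUnitalCStarAlgebra A] [PartialOrder A] [StarOrderedRing A]

lemma norm_sqrt_star_mul_self_mul (a x : A) : ‖sqrt (star a * a) * x‖ = ‖a * x‖ :=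
  CStarRing.norm_mul_eq_of_star_mul_self_eq (by
    rw [(sqrt_nonneg _).isSelfAdjoint.star_eq, sqrt_mul_sqrt_self _ (star_mul_self_nonneg a)]) x

lemma norm_mul_le_norm_mul_of_star_mul_self_le {a b : A} (h : star b * b ≤ star a * a) (x : A) :
    ‖b * x‖ ≤ ‖a * x‖ := by
  rw [← pow_le_pow_iff_left₀ (norm_nonneg _) (norm_nonneg _) two_ne_zero,
    CStarRing.norm_mul_sq, CStarRing.norm_mul_sq]
  exact CStarAlgebra.norm_le_norm_of_nonneg_of_le
    (star_left_conjugate_nonneg (star_mul_self_nonneg b) x) (star_left_conjugate_le_conjugate h x)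

end NonUnital

section Unital

variable {A : Type*} [CStarAlgebra A] [PartialOrder A] [StarOrderedRing A]

lemma star_mul_self_le_of_norm_mul_le {a b : A} (h : ∀ x : A, ‖b * x‖ ≤ ‖a * x‖) :
    star b * b ≤ star a * a := by
  suffices hε : ∀ ε : ℝ, 0 < ε → star b * b ≤ star a * a + algebraMap ℝ A ε by
    have hlim : Filter.Tendsto (fun ε : ℝ => star a * a + algebraMap ℝ A ε)
        (nhdsWithin 0 (Set.Ioi 0)) (nhds (star a * a)) := by
      simpa using tendsto_nhdsWithin_of_tendsto_nhds
        ((continuous_algebraMap ℝ A).tendsto 0 |>.const_add (star a * a))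
    exact ge_of_tendsto hlim (eventually_nhdsWithin_of_forall hε)
  intro ε hε
  have hc : IsStrictlyPositive (star a * a + algebraMap ℝ A ε) :=
    (isStrictlyPositive_algebraMap hε).nonneg_add (star_mul_self_nonneg a)
  have hac : star a * a ≤ star a * a + algebraMap ℝ A ε :=
    le_add_of_nonneg_right (isStrictlyPositive_algebraMap hε).nonneg
  rw [le_iff_norm_sqrt_mul_rpow _ _ (star_mul_self_nonneg a) hc,
    norm_sqrt_star_mul_self_mul] at hac
  rw [le_iff_norm_sqrt_mul_rpow _ _ (star_mul_self_nonneg b) hc, norm_sqrt_star_mul_self_mul]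
  exact (h _).trans hac

end Unital

/-- In a C*-algebra, `B*B ≤ A*A` in the Loewner order iff `‖BX‖ ≤ ‖AX‖` for all `X`. -/
theorem star_mul_le_iff_norm_mul_le
    {𝒜 : Type*} [NonUnitalNormedRing 𝒜] [StarRing 𝒜] [CStarRing 𝒜]
    [PartialOrder 𝒜] [StarOrderedRing 𝒜] [CompleteSpace 𝒜]
    [NormedSpace ℂ 𝒜] [StarModule ℂ 𝒜] [SMulCommClass ℂ 𝒜 𝒜] [IsScalarTower ℂ 𝒜 𝒜]
    (A B : 𝒜) :
    star B * B ≤ star A * A ↔ ∀ X : 𝒜, ‖B * X‖ ≤ ‖A * X‖ := by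
  let _ : NonUnitalCStarAlgebra 𝒜 := { }
  refine ⟨norm_mul_le_norm_mul_of_star_mul_self_le, fun h => ?_⟩
  have hle := star_mul_self_le_of_norm_mul_le (Unitization.norm_inr_mul_le_norm_inr_mul h)
  rw [← Unitization.inr_le_iff _ _ (.star_mul_self B) (.star_mul_self A)]
  simpa only [Unitization.inr_mul, Unitization.inr_star] using hle
end

section
/- Let 𝒜 be a C*-algebra and A, B ∈ 𝒜. Then A*B = 0 if and only if ‖AX‖ ≤ ‖AX + BY‖ for all X, Y ∈ 𝒜. -/
/-!
If `A⋆B = 0`, then `(AX + BY)⋆(AX + BY) = (AX)⋆(AX) + (BY)⋆(BY) ≥ (AX)⋆(AX)`.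

Conversely, let `p = t BB⋆` with `t > 0` so small that `0 ≤ p ≤ 1`, and take `Y = -t B⋆AX`, so
that `AX + BY = (1 - p)AX`. As `(1 - p)² ≤ 1 - p`, the hypothesis gives
`‖X⋆sX‖ ≤ ‖X⋆(s - q)X‖` for all `X`, where `s = A⋆A` and `0 ≤ q = A⋆pA ≤ s`. Taking for `X` the
spectral cutoff `E` of `q` above `c = ‖q‖/2`, the term `EqE ≥ c E²` dominates a fixed positive
multiple of `E(s - q)E`, which is compatible with the norm inequality only if `E = 0`. Then
`‖q‖ ≤ c`, so `q = 0`, i.e. `(A⋆B)(A⋆B)⋆ = 0`.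
-/

open CStarAlgebra Unitization

section Cutoff

variable {A : Type*} [NonUnitalCStarAlgebra A]

noncomputable def spectralCutoff (c : ℝ) (a : A) : A := cfcₙ (fun x : ℝ => max (x - c) 0) a

lemma isSelfAdjoint_spectralCutoff (c : ℝ) (a : A) : IsSelfAdjoint (spectralCutoff c a) :=
  IsSelfAdjoint.cfcₙ

variable [PartialOrder A] [StarOrderedRing A]

lemma smul_spectralCutoff_mul_self_le {c : ℝ} (hc : 0 ≤ c) {q : A} (hq : IsSelfAdjoint q) :
    c • (spectralCutoff c q * spectralCutoff c q) ≤
      spectralCutoff c q * q * spectralCutoff c q := by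
  -- discharges the side conditions `f 0 = 0` of `cfcₙ` below
  have hf0 : max ((0 : ℝ) - c) 0 = 0 := by simpa using hc
  have hl : c • (spectralCutoff c q * spectralCutoff c q) =
      cfcₙ (fun x : ℝ => c * (max (x - c) 0 * max (x - c) 0)) q := by
    rw [cfcₙ_const_mul .., cfcₙ_mul .., spectralCutoff]
  have hr : spectralCutoff c q * q * spectralCutoff c q =
      cfcₙ (fun x : ℝ => max (x - c) 0 * x * max (x - c) 0) q := by
    rw [cfcₙ_mul .., cfcₙ_mul .., cfcₙ_id' ℝ q, spectralCutoff]
  rw [hl, hr]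
  refine cfcₙ_mono fun x _ => ?_
  rcases le_total x c with hxc | hxc
  · simp [max_eq_right (sub_nonpos.mpr hxc)]
  · rw [max_eq_left (sub_nonneg.mpr hxc)]
    nlinarith [mul_self_nonneg (x - c)]

lemma norm_le_of_spectralCutoff_eq_zero {c : ℝ} (hc : 0 ≤ c) {q : A} (hq : 0 ≤ q)
    (h : spectralCutoff c q = 0) : ‖q‖ ≤ c := by
  have hf0 : max ((0 : ℝ) - c) 0 = 0 := by simpa using hc
  have hid : (fun x : ℝ => min x c + max (x - c) 0) = fun x => x := by
    ext x
    rcases le_total x c with hxc | hxc <;> simp [hxc]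
  have hsplit : q = cfcₙ (fun x : ℝ => min x c) q + spectralCutoff c q := by
    rw [spectralCutoff, ← cfcₙ_add .., hid, cfcₙ_id' ℝ q]
  rw [hsplit, h, add_zero]
  refine norm_cfcₙ_le fun x hx => ?_
  have hx0 : 0 ≤ x := quasispectrum_nonneg_of_nonneg q hq x hx
  rw [Real.norm_of_nonneg (le_min hx0 hc)]
  exact min_le_right x c

end Cutoff

section Order

variable {A : Type*} [NonUnitalCStarAlgebra A] [PartialOrder A] [StarOrderedRing A]

lemma norm_le_norm_add_of_star_mul_eq_zero {a b : A} (h : star a * b = 0) : ‖a‖ ≤ ‖a + b‖ := by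
  have hba : star b * a = 0 := by simpa using congrArg star h
  have hle : star a * a ≤ star (a + b) * (a + b) := by
    rw [star_add, add_mul, mul_add, mul_add, h, hba, add_zero, zero_add]
    exact le_add_of_nonneg_right (star_mul_self_nonneg b)
  have := norm_le_norm_of_nonneg_of_le (star_mul_self_nonneg a) hle
  rwa [CStarRing.norm_star_mul_self, CStarRing.norm_star_mul_self,
    ← mul_self_le_mul_self_iff (norm_nonneg _) (norm_nonneg _)] at this

lemma norm_star_mul_self_le_of_norm_le_norm_sub_mul {p v : A} (hp : 0 ≤ p) (hp1 : ‖p‖ ≤ 1)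
    (h : ‖v‖ ≤ ‖v - p * v‖) : ‖star v * v‖ ≤ ‖star v * v - star v * p * v‖ := by
  have hinr : star (v : A⁺¹) * (1 - p) * v = ↑(star v * v - star v * p * v) := by
    simp only [inr_sub, inr_mul, inr_star]
    noncomm_ring
  have key : ‖v - p * v‖ ≤ √‖star v * v - star v * p * v‖ :=
    norm_sub_mul_self_le_of_inr v hp le_rfl hp1 (Real.sqrt_nonneg _)
      (by rw [hinr, norm_inr, Real.sq_sqrt (norm_nonneg _)])
  rw [CStarRing.norm_star_mul_self, ← Real.sqrt_le_sqrt_iff (norm_nonneg _),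
    Real.sqrt_mul_self (norm_nonneg _)]
  exact h.trans key

lemma eq_zero_of_smul_le_of_norm_add_le {P Q : A} {κ : ℝ} (hκ : 0 < κ) (hP : 0 ≤ P)
    (hPQ : κ • P ≤ Q) (h : ‖P + Q‖ ≤ ‖P‖) : Q = 0 := by
  have hQ : 0 ≤ Q := (smul_nonneg hκ.le hP).trans hPQ
  have hgrow : (1 + κ) * ‖P‖ ≤ ‖P + Q‖ := by
    have hle : (1 + κ) • P ≤ P + Q := by
      rw [add_smul, one_smul]
      exact add_le_add_right hPQ P
    have := norm_le_norm_of_nonneg_of_le (smul_nonneg (by positivity) hP) hle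
    rwa [norm_smul, Real.norm_of_nonneg (by positivity)] at this
  have hP0 : ‖P‖ = 0 := by nlinarith [norm_nonneg P]
  have hPQ0 : ‖P + Q‖ = 0 := le_antisymm (h.trans hP0.le) (norm_nonneg _)
  rw [norm_eq_zero] at hP0 hPQ0
  simpa [hP0] using hPQ0

lemma eq_zero_of_forall_norm_conj_le {s q : A} (hq : 0 ≤ q) (hqs : q ≤ s)
    (h : ∀ z : A, ‖star z * s * z‖ ≤ ‖star z * (s - q) * z‖) : q = 0 := by
  by_contra hq0
  set c := ‖q‖ / 2
  have hc : 0 < c := by have := norm_pos_iff.mpr hq0; positivity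
  set E := spectralCutoff c q
  have hE : star E = E := (isSelfAdjoint_spectralCutoff c q).star_eq
  have hEE : 0 ≤ E * E := by simpa [hE] using star_mul_self_nonneg E
  have hP : 0 ≤ E * (s - q) * E := by
    simpa [hE] using star_left_conjugate_nonneg (sub_nonneg.mpr hqs) E
  have hPE : E * (s - q) * E ≤ ‖s - q‖ • (E * E) := by
    simpa [hE] using
      star_left_conjugate_le_norm_smul (a := E) (sub_nonneg.mpr hqs).isSelfAdjoint
  set κ := c / (‖s - q‖ + 1)
  have hκ : 0 < κ := by positivity
  have hPQ : κ • (E * (s - q) * E) ≤ E * q * E :=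
    calc κ • (E * (s - q) * E) ≤ κ • (‖s - q‖ • (E * E)) :=
          smul_le_smul_of_nonneg_left hPE hκ.le
      _ = (κ * ‖s - q‖) • (E * E) := smul_smul ..
      _ ≤ c • (E * E) := by
        refine smul_le_smul_of_nonneg_right ?_ hEE
        rw [div_mul_eq_mul_div, div_le_iff₀ (by positivity)]
        nlinarith [norm_nonneg (s - q)]
      _ ≤ E * q * E := smul_spectralCutoff_mul_self_le hc.le hq.isSelfAdjoint
  have hQ : E * q * E = 0 := by
    refine eq_zero_of_smul_le_of_norm_add_le hκ hP hPQ ?_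
    simpa [hE, ← mul_add, ← add_mul] using h E
  have hE0 : E = 0 := by
    have : c • (E * E) = 0 := le_antisymm
      (hQ ▸ smul_spectralCutoff_mul_self_le hc.le hq.isSelfAdjoint) (smul_nonneg hc.le hEE)
    rw [smul_eq_zero_iff_right hc.ne'] at this
    rwa [← CStarRing.star_mul_self_eq_zero_iff, hE]
  have := norm_le_of_spectralCutoff_eq_zero hc.le hq hE0
  linarith [norm_pos_iff.mpr hq0, show c = ‖q‖ / 2 from rfl]

lemma star_mul_eq_zero_of_forall_norm_le {a b : A}
    (h : ∀ x y : A, ‖a * x‖ ≤ ‖a * x + b * y‖) : star a * b = 0 := by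
  set t : ℝ := (‖b‖ ^ 2 + 1)⁻¹
  have ht : 0 < t := by positivity
  set p := t • (b * star b)
  have hp : 0 ≤ p := smul_nonneg ht.le (mul_star_self_nonneg b)
  have hp1 : ‖p‖ ≤ 1 := by
    rw [norm_smul, CStarRing.norm_self_mul_star, Real.norm_of_nonneg ht.le, ← sq,
      inv_mul_le_iff₀ (by positivity)]
    linarith
  have hpa : star a * p * a ≤ star a * a :=
    (star_left_conjugate_le_norm_smul hp.isSelfAdjoint).trans
      (smul_le_of_le_one_left (star_mul_self_nonneg a) hp1)
  have hconj : ∀ z : A,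
      ‖star z * (star a * a) * z‖ ≤ ‖star z * (star a * a - star a * p * a) * z‖ := by
    intro z
    have hz := h z (-(t • (star b * (a * z))))
    have hsub : a * z + b * -(t • (star b * (a * z))) = a * z - p * (a * z) := by
      simp only [p, mul_neg, mul_smul_comm, smul_mul_assoc, mul_assoc, sub_eq_add_neg]
    rw [hsub] at hz
    convert norm_star_mul_self_le_of_norm_le_norm_sub_mul hp hp1 hz using 2 <;>
      simp only [star_mul, mul_sub, sub_mul, mul_assoc]
  have hq := eq_zero_of_forall_norm_conj_le (star_left_conjugate_nonneg hp a) hpa hconj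
  rw [← CStarRing.mul_star_self_eq_zero_iff]
  simp only [p, mul_smul_comm, smul_mul_assoc, smul_eq_zero_iff_right ht.ne'] at hq
  simpa [mul_assoc] using hq

end Order

/-- In a C*-algebra, `A*B = 0` iff `‖AX‖ ≤ ‖AX + BY‖` for all `X, Y`. -/
theorem star_mul_eq_zero_iff_norm_ineq
    {𝒜 : Type*} [NonUnitalNormedRing 𝒜] [StarRing 𝒜] [CStarRing 𝒜]
    [CompleteSpace 𝒜]
    [NormedSpace ℂ 𝒜] [StarModule ℂ 𝒜] [SMulCommClass ℂ 𝒜 𝒜] [IsScalarTower ℂ 𝒜 𝒜]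
    (A B : 𝒜) :
    star A * B = 0 ↔ ∀ X Y : 𝒜, ‖A * X‖ ≤ ‖A * X + B * Y‖ := by
  let _ : NonUnitalCStarAlgebra 𝒜 := {}
  let _ := CStarAlgebra.spectralOrder 𝒜
  have := CStarAlgebra.spectralOrderedRing 𝒜
  refine ⟨fun h X Y => norm_le_norm_add_of_star_mul_eq_zero ?_,
    star_mul_eq_zero_of_forall_norm_le⟩
  rw [star_mul, mul_assoc, ← mul_assoc (star A), h, zero_mul, mul_zero]
end

section
/- Let 𝒜 be a C*-algebra, let P₀, …, P_m ∈ 𝒜 be positive elements, and let A₀, …, A_m ∈ 𝒜. Then the identity ‖Σ_{j=0}^m AⱼXⱼ‖² = ‖Σ_{j=0}^m Xⱼ*PⱼXⱼ‖ holds for all X₀, …, X_m ∈ 𝒜 if and only if Aⱼ*Aⱼ = Pⱼ for all j and Aₖ*Aⱼ = 0 whenever k ≠ j. -/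
open scoped CStarAlgebra
open Matrix CFC Filter Topology

/-!
Write `B = (∑ Aⱼ Xⱼ)⋆ (∑ Aⱼ Xⱼ)` and `C = ∑ Xⱼ⋆ Pⱼ Xⱼ`. Replacing `X` by `X z` turns the norm
identity into `‖z⋆ B z‖ = ‖z⋆ C z‖` for all `z`, and positive elements are determined by these
norms: if `‖z⋆ B z‖ ≤ ‖z⋆ C z‖` for all `z`, then `w = r B r` with `r = (C + ε)^(-1/2)` (in the
unitization) satisfies `‖z⋆ w z‖ ≤ ‖z‖²`, and `z = √w` gives `‖w‖ ≤ 1`, i.e. `B ≤ C + ε`.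
So the norm identity says `B = C` for all `X`, an identity between the quadratic forms of the
matrices `(Aₖ⋆ Aⱼ)ₖⱼ` and `diag P`; by complex polarization these matrices are then equal.
-/

section CStarRing

variable {A : Type*} [NonUnitalNormedRing A] [StarRing A] [CStarRing A]

lemma eq_zero_of_forall_star_mul_mul_eq_zero {F : A} (h : ∀ x y : A, star x * F * y = 0) :
    F = 0 := by
  have hsq : star (star F * F) * (star F * F) = 0 := by
    rw [star_mul, star_star]
    exact h F (star F * F)
  rwa [CStarRing.star_mul_self_eq_zero_iff, CStarRing.star_mul_self_eq_zero_iff] at hsq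

end CStarRing

section Matrix

variable {ι A : Type*}

lemma vecMulVec_star_self_eq_diagonal_iff [DecidableEq ι] [NonUnitalNonAssocSemiring A] [Star A]
    {a P : ι → A} :
    vecMulVec (star a) a = diagonal P ↔
      (∀ j, star (a j) * a j = P j) ∧ ∀ j k, j ≠ k → star (a k) * a j = 0 := by
  simp only [← Matrix.ext_iff, vecMulVec_apply, diagonal_apply, Pi.star_apply]
  refine ⟨fun h => ⟨fun j => by simpa using h j j, fun j k hjk => by simpa [hjk.symm] using h k j⟩,
    fun ⟨hdiag, hoff⟩ k j => ?_⟩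
  rcases eq_or_ne k j with rfl | hkj
  · simpa using hdiag k
  · simpa [hkj] using hoff j k hkj.symm

variable [Fintype ι]

lemma star_dotProduct_mul_dotProduct [NonUnitalSemiring A] [StarRing A] (a X Y : ι → A) :
    star (a ⬝ᵥ X) * (a ⬝ᵥ Y) = star X ᵥ* vecMulVec (star a) a ⬝ᵥ Y := by
  rw [vecMul_vecMulVec, smul_dotProduct, smul_eq_mul, star_dotProduct_star]

lemma vecMul_diagonal_dotProduct [DecidableEq ι] [NonUnitalNonAssocSemiring A] (v d w : ι → A) :
    v ᵥ* diagonal d ⬝ᵥ w = ∑ j, v j * d j * w j := by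
  simp only [dotProduct, vecMul_diagonal]

variable [NonUnitalNormedRing A] [StarRing A] [CStarRing A] [Module ℂ A] [StarModule ℂ A]
  [IsScalarTower ℂ A A] [SMulCommClass ℂ A A]

lemma Matrix.eq_of_forall_star_vecMul_dotProduct_self_eq [DecidableEq ι] {M N : Matrix ι ι A}
    (h : ∀ X, star X ᵥ* M ⬝ᵥ X = star X ᵥ* N ⬝ᵥ X) : M = N := by
  set s : (ι → A) → (ι → A) → A := fun X Y => star X ᵥ* (M - N) ⬝ᵥ Y
  have hself : ∀ X, s X X = 0 := fun X => by simp [s, vecMul_sub, h]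
  have hsymm : ∀ X Y, s X Y + s Y X = 0 := fun X Y => by
    have hexp : s (X + Y) (X + Y) = s X X + (s X Y + s Y X) + s Y Y := by
      simp only [s, star_add, add_vecMul, add_dotProduct, dotProduct_add]
      abel
    rwa [hself, hself, hself, zero_add, add_zero, eq_comm] at hexp
  have hzero : ∀ X Y, s X Y = 0 := fun X Y => by
    have hI : s X (Complex.I • Y) + s (Complex.I • Y) X = Complex.I • (s X Y - s Y X) := by
      simp only [s, star_smul, smul_vecMul, smul_dotProduct, dotProduct_smul, Complex.star_def,
        Complex.conj_I]
      module
    have h2I : (2 * Complex.I) • s X Y = 0 := by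
      linear_combination (norm := module) Complex.I • hsymm X Y + hI.symm.trans (hsymm X _)
    simpa [Complex.I_ne_zero] using h2I
  ext k j
  rw [← sub_eq_zero]
  refine eq_zero_of_forall_star_mul_mul_eq_zero fun x y => ?_
  simpa [s, mul_assoc] using hzero (Pi.single k x) (Pi.single j y)

lemma forall_star_sum_mul_self_eq_iff [DecidableEq ι] {a P : ι → A} :
    (∀ X : ι → A, star (∑ j, a j * X j) * (∑ j, a j * X j) = ∑ j, star (X j) * P j * X j) ↔
      vecMulVec (star a) a = diagonal P := by
  have hform (X : ι → A) : star (∑ j, a j * X j) * (∑ j, a j * X j) =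
      star X ᵥ* vecMulVec (star a) a ⬝ᵥ X := star_dotProduct_mul_dotProduct a X X
  have hdiag (X : ι → A) : ∑ j, star (X j) * P j * X j = star X ᵥ* diagonal P ⬝ᵥ X :=
    (vecMul_diagonal_dotProduct _ _ _).symm
  simp only [hform, hdiag]
  exact ⟨Matrix.eq_of_forall_star_vecMul_dotProduct_self_eq, fun h X => by rw [h]⟩

end Matrix

section NonUnitalCStarAlgebra

variable {A : Type*} [NonUnitalCStarAlgebra A] [PartialOrder A] [StarOrderedRing A]

lemma norm_le_one_of_forall_norm_star_left_conjugate_le {w : A} (hw : 0 ≤ w)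
    (h : ∀ z : A, ‖star z * w * z‖ ≤ ‖star z * z‖) : ‖w‖ ≤ 1 := by
  set u := sqrt w
  have hu : star u = u := (IsSelfAdjoint.of_nonneg (sqrt_nonneg w)).star_eq
  have huu : u * u = w := sqrt_mul_sqrt_self w hw
  have hconj : star u * w * u = w * w := by rw [hu, ← huu]; noncomm_ring
  have hroot := h u
  rw [hconj, hu, huu, (IsSelfAdjoint.of_nonneg hw).norm_mul_self] at hroot
  nlinarith [norm_nonneg w]

lemma inr_le_add_smul_one_of_forall_norm_star_left_conjugate_le {B C : A} (hB : 0 ≤ B)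
    (hC : 0 ≤ C) (h : ∀ x : A, ‖star x * B * x‖ ≤ ‖star x * C * x‖) {ε : ℝ} (hε : 0 < ε) :
    (B : A⁺¹) ≤ C + ε • 1 := by
  have hB' : 0 ≤ (B : A⁺¹) := Unitization.inr_nonneg_iff.2 hB
  set b : A⁺¹ := C + ε • 1
  have hCb : (C : A⁺¹) ≤ b := le_add_of_nonneg_right (smul_nonneg hε.le zero_le_one)
  have hb : IsStrictlyPositive b :=
    (isStrictlyPositive_one.smul hε).nonneg_add (Unitization.inr_nonneg_iff.2 hC)
  set r := b ^ (-(1 / 2) : ℝ)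
  have hr : IsSelfAdjoint r := .of_nonneg rpow_nonneg
  rw [le_iff_norm_sqrt_mul_rpow _ _ hB' hb, ← sq_le_one_iff₀ (norm_nonneg _), sq,
    ← CStarRing.norm_star_mul_self, star_mul, hr.star_eq,
    (IsSelfAdjoint.of_nonneg (sqrt_nonneg _)).star_eq, ← mul_assoc, mul_assoc r,
    sqrt_mul_sqrt_self _ hB']
  obtain ⟨y, hy⟩ : ∃ y : A, (y : A⁺¹) = r * B * r :=
    CanLift.prf _ (by simp [Unitization.fst_mul])
  have hy0 : 0 ≤ y := by
    rw [← Unitization.inr_nonneg_iff, hy]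
    simpa [hr.star_eq] using star_left_conjugate_nonneg hB' r
  have hrCr : r * C * r ≤ 1 := calc
    r * C * r ≤ r * b * r := by simpa [hr.star_eq] using star_left_conjugate_le_conjugate hCb r
    _ = 1 := conjugate_rpow_neg_one_half b hb
  rw [← hy, Unitization.norm_inr]
  refine norm_le_one_of_forall_norm_star_left_conjugate_le hy0 fun z => ?_
  obtain ⟨x, hx⟩ : ∃ x : A, (x : A⁺¹) = r * z := CanLift.prf _ (by simp [Unitization.fst_mul])
  have hCx : 0 ≤ ((star x * C * x : A) : A⁺¹) :=
    Unitization.inr_nonneg_iff.2 (star_left_conjugate_nonneg hC x)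
  calc ‖star z * y * z‖ = ‖star x * B * x‖ := by
        congr 1
        apply Unitization.inr_injective (R := ℂ)
        push_cast
        rw [hx, hy, star_mul, hr.star_eq]
        noncomm_ring
    _ ≤ ‖star x * C * x‖ := h x
    _ ≤ ‖star z * z‖ := by
        rw [← Unitization.norm_inr (𝕜 := ℂ), ← Unitization.norm_inr (𝕜 := ℂ) (star z * z)]
        refine CStarAlgebra.norm_le_norm_of_nonneg_of_le hCx ?_
        push_cast
        rw [hx, star_mul, hr.star_eq]
        calc star (z : A⁺¹) * r * C * (r * z) = star (z : A⁺¹) * (r * C * r) * z := by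
              noncomm_ring
          _ ≤ star (z : A⁺¹) * z := by
              simpa using star_left_conjugate_le_conjugate hrCr (z : A⁺¹)

lemma le_of_forall_norm_star_left_conjugate_le {B C : A} (hB : 0 ≤ B) (hC : 0 ≤ C)
    (h : ∀ x : A, ‖star x * B * x‖ ≤ ‖star x * C * x‖) : B ≤ C := by
  rw [← Unitization.inr_le_iff B C (.of_nonneg hB) (.of_nonneg hC)]
  have hlim : Tendsto (fun ε : ℝ => (C : A⁺¹) + ε • 1) (𝓝[>] 0) (𝓝 C) := by
    have hcont : Continuous fun ε : ℝ => (C : A⁺¹) + ε • 1 := by fun_prop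
    simpa using (hcont.tendsto 0).mono_left nhdsWithin_le_nhds
  exact ge_of_tendsto hlim (eventually_nhdsWithin_of_forall fun ε hε =>
    inr_le_add_smul_one_of_forall_norm_star_left_conjugate_le hB hC h hε)

lemma eq_of_forall_norm_star_left_conjugate_eq {B C : A} (hB : 0 ≤ B) (hC : 0 ≤ C)
    (h : ∀ x : A, ‖star x * B * x‖ = ‖star x * C * x‖) : B = C :=
  le_antisymm (le_of_forall_norm_star_left_conjugate_le hB hC fun x => (h x).le)
    (le_of_forall_norm_star_left_conjugate_le hC hB fun x => (h x).ge)

lemma forall_norm_sq_sum_eq_iff {ι : Type*} [Fintype ι] {a P : ι → A} (hP : ∀ j, 0 ≤ P j) :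
    (∀ X : ι → A, ‖∑ j, a j * X j‖ ^ 2 = ‖∑ j, star (X j) * P j * X j‖) ↔
      ∀ X : ι → A, star (∑ j, a j * X j) * (∑ j, a j * X j) = ∑ j, star (X j) * P j * X j := by
  refine ⟨fun h X => ?_, fun h X => by rw [sq, ← CStarRing.norm_star_mul_self, h]⟩
  refine eq_of_forall_norm_star_left_conjugate_eq (star_mul_self_nonneg _)
    (Finset.sum_nonneg fun j _ => star_left_conjugate_nonneg (hP j) _) fun z => ?_
  calc ‖star z * (star (∑ j, a j * X j) * ∑ j, a j * X j) * z‖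
      = ‖(∑ j, a j * X j) * z‖ ^ 2 := by
        rw [sq, ← CStarRing.norm_star_mul_self, star_mul]
        congr 1
        noncomm_ring
    _ = ‖∑ j, a j * (X j * z)‖ ^ 2 := by simp only [Finset.sum_mul, mul_assoc]
    _ = ‖∑ j, star (X j * z) * P j * (X j * z)‖ := h _
    _ = ‖star z * (∑ j, star (X j) * P j * X j) * z‖ := by
        simp only [Finset.mul_sum, Finset.sum_mul, star_mul, mul_assoc]

end NonUnitalCStarAlgebra

/-- For positive elements `P₀, …, P_m` of a C*-algebra `𝒜`, elements `A₀, …, A_m ∈ 𝒜`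
satisfy `‖Σⱼ AⱼXⱼ‖² = ‖Σⱼ Xⱼ*PⱼXⱼ‖` for all `X₀, …, X_m ∈ 𝒜` iff `Aⱼ*Aⱼ = Pⱼ` for
all `j` and `Aₖ*Aⱼ = 0` for `k ≠ j`. -/
theorem norm_identity_iff_partial_isometries
    {𝒜 : Type*} [NonUnitalNormedRing 𝒜] [StarRing 𝒜] [CStarRing 𝒜]
    [PartialOrder 𝒜] [StarOrderedRing 𝒜] [CompleteSpace 𝒜]
    [NormedSpace ℂ 𝒜] [StarModule ℂ 𝒜] [SMulCommClass ℂ 𝒜 𝒜] [IsScalarTower ℂ 𝒜 𝒜]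
    (m : ℕ) (P : Fin (m + 1) → 𝒜) (hP : ∀ j, 0 ≤ P j) (A : Fin (m + 1) → 𝒜) :
    (∀ X : Fin (m + 1) → 𝒜,
        ‖∑ j, A j * X j‖ ^ 2 = ‖∑ j, star (X j) * P j * X j‖) ↔
      ((∀ j, star (A j) * A j = P j) ∧ ∀ j k, j ≠ k → star (A k) * A j = 0) := by
  let _ : NonUnitalCStarAlgebra 𝒜 := {}
  rw [forall_norm_sq_sum_eq_iff hP, forall_star_sum_mul_self_eq_iff,
    vecMulVec_star_self_eq_diagonal_iff]
end

section
/- Let 𝒜 be a unital C*-algebra and let A, B ∈ 𝒜 be nonzero elements with A*B = 0. Then ‖A + λB‖² = ‖A‖² + |λ|²‖B‖² holds for all λ ∈ ℂ if and only if there exists a state ω on 𝒜 such that ω(A*A) = ‖A‖² and ω(B*B) = ‖B‖². -/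
open scoped ComplexOrder

/-!
Because `A* B = 0`, `(A + λB)*(A + λB) = A*A + |λ|² B*B`, so `‖A + λB‖² = ‖A*A + |λ|² B*B‖` is
always at most `‖A‖² + |λ|² ‖B‖²`, and any state satisfies `ω(C*C) ≤ ‖C‖²`. A state attaining
`‖A‖²` and `‖B‖²` gives the reverse inequality when evaluated at `(A + λB)*(A + λB)`.
Conversely, the norm of the positive element `A*A + B*B` lies in its spectrum, so it is attained
by a state: a character of the closed subalgebra generated by `A*A + B*B`, extended by
Hahn–Banach, is a unital functional of norm one, hence positive. At `λ = 1` that norm is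
`‖A‖² + ‖B‖²`, which forces `ω(A*A) = ‖A‖²` and `ω(B*B) = ‖B‖²`.
-/

theorem star_add_smul_mul_add_smul_of_star_mul_eq_zero {A : Type*} [NonUnitalRing A]
    [StarRing A] [Module ℂ A] [StarModule ℂ A] [IsScalarTower ℂ A A] [SMulCommClass ℂ A A]
    {a b : A} (hab : star a * b = 0) (l : ℂ) :
    star (a + l • b) * (a + l • b) = star a * a + (‖l‖ ^ 2 : ℂ) • (star b * b) := by
  have hba : star b * a = 0 := by simpa using congrArg star hab
  rw [← Complex.conj_mul', star_add, star_smul, add_mul, mul_add, mul_add, mul_smul_comm,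
    smul_mul_assoc, smul_mul_smul_comm, hab, hba]
  simp

theorem exists_strongDual_norm_le_one_apply_eq_of_mem_spectrum {A : Type*} [NormedRing A]
    [NormOneClass A] [NormedAlgebra ℂ A] [CompleteSpace A] {a : A} {z : ℂ}
    (hz : z ∈ spectrum ℂ a) : ∃ g : StrongDual ℂ A, ‖g‖ ≤ 1 ∧ g 1 = 1 ∧ g a = z := by
  let S := Algebra.elemental ℂ a
  let _ : NormedCommRing S := { SubringClass.toNormedRing S with mul_comm := mul_comm }
  have : CompleteSpace S := (Algebra.elemental.isClosed ℂ a).completeSpace_coe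
  let a' : S := ⟨a, Algebra.elemental.self_mem ℂ a⟩
  obtain ⟨φ, hφ⟩ :=
    WeakDual.CharacterSpace.mem_spectrum_iff_exists.mp (spectrum.subset_subalgebra a' hz)
  obtain ⟨g, hgφ, hg⟩ := exists_extension_norm_eq (Subalgebra.toSubmodule S)
    (WeakDual.toStrongDual (φ : WeakDual ℂ S))
  refine ⟨g, ?_, (hgφ ⟨1, one_mem S⟩).trans (map_one φ), (hgφ a').trans hφ⟩
  rw [hg]
  exact (WeakDual.CharacterSpace.norm_le_norm_one φ).trans (norm_one (α := A)).le

theorem map_nonneg_of_forall_star_mul_self_nonneg {R M F : Type*} [NonUnitalSemiring R]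
    [PartialOrder R] [StarRing R] [StarOrderedRing R] [AddCommMonoid M] [PartialOrder M]
    [IsOrderedAddMonoid M] [FunLike F R M] [AddMonoidHomClass F R M] (f : F)
    (hf : ∀ c, 0 ≤ f (star c * c)) {x : R} (hx : 0 ≤ x) : 0 ≤ f x := by
  rw [StarOrderedRing.nonneg_iff] at hx
  induction hx using AddSubmonoid.closure_induction with
  | mem x hx => obtain ⟨c, rfl⟩ := hx; exact hf c
  | zero => simp
  | add x y _ _ hx hy => simpa using add_nonneg hx hy

section CStarAlgebra

variable {A : Type*} [CStarAlgebra A]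

theorem IsSelfAdjoint.norm_add_smul_I_sq_le [Nontrivial A] {a : A} (ha : IsSelfAdjoint a)
    (t : ℝ) : ‖a + (t * Complex.I) • (1 : A)‖ ^ 2 ≤ ‖a‖ ^ 2 + t ^ 2 := by
  have h : star (a + (t * Complex.I) • (1 : A)) * (a + (t * Complex.I) • 1)
      = a * a + (t ^ 2 : ℂ) • 1 := by
    simp only [star_add, star_smul, ha.star_eq, star_one, add_mul, mul_add,
      smul_mul_assoc, mul_smul_comm, one_mul, mul_one, Complex.star_def, map_mul,
      Complex.conj_ofReal, Complex.conj_I]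
    match_scalars
    · ring
    · ring
    · linear_combination (-(t : ℂ) ^ 2) * Complex.I_sq
  calc ‖a + (t * Complex.I) • (1 : A)‖ ^ 2 = ‖a * a + (t ^ 2 : ℂ) • (1 : A)‖ := by
        rw [← h, CStarRing.norm_star_mul_self, sq]
    _ ≤ ‖a * a‖ + ‖(t ^ 2 : ℂ) • (1 : A)‖ := norm_add_le _ _
    _ = ‖a‖ ^ 2 + t ^ 2 := by simp [ha.norm_mul_self, norm_smul]

theorem StrongDual.im_apply_eq_zero_of_isSelfAdjoint [Nontrivial A] {g : StrongDual ℂ A}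
    (hg : ‖g‖ ≤ 1) (hg1 : g 1 = 1) {a : A} (ha : IsSelfAdjoint a) : (g a).im = 0 := by
  have key (t : ℝ) : (g a).im ^ 2 + 2 * t * (g a).im ≤ ‖a‖ ^ 2 := by
    have h1 : ‖g a + t * Complex.I‖ ≤ ‖a + (t * Complex.I) • (1 : A)‖ := by
      simpa [hg1] using g.le_of_opNorm_le hg (a + (t * Complex.I) • 1)
    have h2 : ((g a).im + t) ^ 2 ≤ ‖g a + t * Complex.I‖ ^ 2 := by
      rw [Complex.sq_norm, Complex.normSq_apply]
      simp only [Complex.add_re, Complex.mul_re, Complex.ofReal_re, Complex.I_re, mul_zero,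
        Complex.ofReal_im, Complex.I_im, mul_one, sub_self, add_zero, Complex.add_im,
        Complex.mul_im]
      nlinarith [sq_nonneg (g a).re]
    nlinarith [ha.norm_add_smul_I_sq_le t, norm_nonneg (g a + t * Complex.I)]
  by_contra hne
  have := key ((‖a‖ ^ 2 + 1) / (2 * (g a).im))
  field_simp at this
  nlinarith [sq_nonneg (g a).im]

structure IsState_s15 (ω : A →ₗ[ℂ] ℂ) : Prop where
  apply_star_mul_self_nonneg (c : A) : 0 ≤ ω (star c * c)
  map_one : ω 1 = 1

variable [PartialOrder A] [StarOrderedRing A]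

theorem StrongDual.apply_nonneg_of_norm_le_one [Nontrivial A] {g : StrongDual ℂ A}
    (hg : ‖g‖ ≤ 1) (hg1 : g 1 = 1) {b : A} (hb : 0 ≤ b) : 0 ≤ g b := by
  set d := algebraMap ℝ A ‖b‖ - b
  have hd : ‖d‖ ≤ ‖b‖ := by
    rw [CStarAlgebra.norm_le_iff_le_algebraMap d (norm_nonneg b)
      (sub_nonneg.mpr (IsSelfAdjoint.of_nonneg hb).le_algebraMap_norm_self)]
    exact sub_le_self _ hb
  have hgd : g b = ‖b‖ - g d := by
    simp [d, Algebra.algebraMap_eq_smul_one, hg1]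
  have hgd_re : (g d).re ≤ ‖b‖ :=
    (Complex.re_le_norm _).trans ((g.le_of_opNorm_le hg d).trans (by rwa [one_mul]))
  have hgb_im : (g b).im = 0 := im_apply_eq_zero_of_isSelfAdjoint hg hg1 (.of_nonneg hb)
  refine Complex.nonneg_iff.mpr ⟨?_, hgb_im.symm⟩
  simpa [hgd] using hgd_re

theorem IsState_s15.apply_le_norm {ω : A →ₗ[ℂ] ℂ} (hω : IsState_s15 ω) {a : A} (ha : IsSelfAdjoint a) :
    ω a ≤ ‖a‖ := by
  have : ω a ≤ ω (algebraMap ℝ A ‖a‖) :=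
    (PositiveLinearMap.mk₀ ω fun _ ↦
      map_nonneg_of_forall_star_mul_self_nonneg ω hω.apply_star_mul_self_nonneg)
    |>.apply_le_of_isSelfAdjoint a ha
  simpa [Algebra.algebraMap_eq_smul_one, hω.map_one] using this

theorem IsState_s15.apply_star_mul_self_le_norm_sq {ω : A →ₗ[ℂ] ℂ} (hω : IsState_s15 ω) (c : A) :
    ω (star c * c) ≤ (‖c‖ ^ 2 : ℝ) := by
  simpa [CStarRing.norm_star_mul_self, sq] using hω.apply_le_norm (.star_mul_self c)

theorem exists_isState_apply_eq_norm [Nontrivial A] {a : A} (ha : 0 ≤ a) :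
    ∃ ω : A →ₗ[ℂ] ℂ, IsState_s15 ω ∧ ω a = ‖a‖ := by
  have hmem : ((‖a‖ : ℝ) : ℂ) ∈ spectrum ℂ a :=
    (IsSelfAdjoint.of_nonneg ha).coe_mem_spectrum_complex.mpr
      (CStarAlgebra.norm_mem_spectrum_of_nonneg ha)
  obtain ⟨g, hg, hg1, hga⟩ := exists_strongDual_norm_le_one_apply_eq_of_mem_spectrum hmem
  exact ⟨g, ⟨fun c ↦ g.apply_nonneg_of_norm_le_one hg hg1 (star_mul_self_nonneg c), hg1⟩, hga⟩

end CStarAlgebra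

theorem pythagoras_orthogonal_of_orthogonal_ranges_iff_state_general
    {𝒜 : Type*} [NormedRing 𝒜] [StarRing 𝒜] [CStarRing 𝒜] [CompleteSpace 𝒜]
    [NormedAlgebra ℂ 𝒜] [StarModule ℂ 𝒜]
    (A B : 𝒜) (hA0 : A ≠ 0) (hAB : star A * B = 0) :
    (∀ l : ℂ, ‖A + l • B‖ ^ 2 = ‖A‖ ^ 2 + ‖l‖ ^ 2 * ‖B‖ ^ 2) ↔
      ∃ ω : 𝒜 →ₗ[ℂ] ℂ, (∀ C : 𝒜, 0 ≤ ω (star C * C)) ∧ ω 1 = 1 ∧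
        ω (star A * A) = (‖A‖ ^ 2 : ℝ) ∧ ω (star B * B) = (‖B‖ ^ 2 : ℝ) := by
  let _ : CStarAlgebra 𝒜 := { }
  let _ := CStarAlgebra.spectralOrder 𝒜
  have := CStarAlgebra.spectralOrderedRing 𝒜
  have : Nontrivial 𝒜 := ⟨⟨A, 0, hA0⟩⟩
  have hW (l : ℂ) : ‖A + l • B‖ ^ 2 = ‖star A * A + (‖l‖ ^ 2 : ℂ) • (star B * B)‖ := by
    rw [← star_add_smul_mul_add_smul_of_star_mul_eq_zero hAB, CStarRing.norm_star_mul_self, sq]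
  constructor
  · intro hpyth
    have hZ : ‖star A * A + star B * B‖ = ‖A‖ ^ 2 + ‖B‖ ^ 2 := by
      simpa using (hW 1).symm.trans (hpyth 1)
    obtain ⟨ω, hω, hωZ⟩ := exists_isState_apply_eq_norm
      (add_nonneg (star_mul_self_nonneg A) (star_mul_self_nonneg B))
    have hsum : ω (star A * A) + ω (star B * B) = (‖A‖ ^ 2 : ℝ) + (‖B‖ ^ 2 : ℝ) := by
      rw [← map_add, hωZ, hZ, Complex.ofReal_add]
    exact ⟨ω, hω.apply_star_mul_self_nonneg, hω.map_one, (add_eq_add_iff_eq_and_eq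
      (hω.apply_star_mul_self_le_norm_sq A) (hω.apply_star_mul_self_le_norm_sq B)).mp hsum⟩
  · rintro ⟨ω, hω_nonneg, hω1, hωA, hωB⟩ l
    have hω : IsState_s15 ω := ⟨hω_nonneg, hω1⟩
    have hx : ω (star (A + l • B) * (A + l • B)) = (‖A‖ ^ 2 + ‖l‖ ^ 2 * ‖B‖ ^ 2 : ℝ) := by
      rw [star_add_smul_mul_add_smul_of_star_mul_eq_zero hAB, map_add, map_smul, hωA, hωB,
        smul_eq_mul]
      push_cast
      ring
    refine le_antisymm ?_ ?_
    · rw [hW]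
      exact (norm_add_le _ _).trans_eq (by simp [norm_smul, CStarRing.norm_star_mul_self, sq])
    · exact_mod_cast hx ▸ hω.apply_star_mul_self_le_norm_sq (A + l • B)

/-- Let `A, B` be nonzero elements of a unital C*-algebra with `A*B = 0`.  Then
`‖A + λB‖² = ‖A‖² + |λ|²‖B‖²` for all `λ ∈ ℂ` iff there is a state `ω` with
`ω(A*A) = ‖A‖²` and `ω(B*B) = ‖B‖²`. -/
theorem pythagoras_orthogonal_of_orthogonal_ranges_iff_state
    {𝒜 : Type*} [NormedRing 𝒜] [StarRing 𝒜] [CStarRing 𝒜] [CompleteSpace 𝒜]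
    [NormedAlgebra ℂ 𝒜] [StarModule ℂ 𝒜]
    (A B : 𝒜) (hA0 : A ≠ 0) (hB0 : B ≠ 0) (hAB : star A * B = 0) :
    (∀ l : ℂ, ‖A + l • B‖ ^ 2 = ‖A‖ ^ 2 + ‖l‖ ^ 2 * ‖B‖ ^ 2) ↔
      ∃ ω : 𝒜 →ₗ[ℂ] ℂ, (∀ C : 𝒜, 0 ≤ ω (star C * C)) ∧ ω 1 = 1 ∧
        ω (star A * A) = (‖A‖ ^ 2 : ℝ) ∧ ω (star B * B) = (‖B‖ ^ 2 : ℝ) :=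
  pythagoras_orthogonal_of_orthogonal_ranges_iff_state_general A B hA0 hAB
end

section
/- Let H be a complex Hilbert space, ξ ∈ H a unit vector, and let B ∈ B(H) be the orthogonal projection onto the one-dimensional subspace ℂξ. If A ∈ B(H) satisfies ‖A‖ = 1 and ‖A + λB‖² = 1 + |λ|² for all λ ∈ ℂ, then ⟨Aξ, ξ⟩ = 0 and ‖Aξ‖² + ‖A*ξ‖² = 1. -/
/-!
Write `a = ‖A* ξ‖` and `b = ‖A ξ‖`. Testing `‖A + λB‖² ≤ 1 + |λ|²` on `ξ` with `λ = ⟨Aξ, ξ⟩⁻¹`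
forces `⟨Aξ, ξ⟩ = 0`. Given this, for real `r → ∞` one has
`‖A + rB‖² = r² + a² + b² + O(1/r)`: the upper bound comes from splitting a vector along `ξ` and
`ξ^⊥` and estimating a `2 × 2` quadratic form, the lower bound from the test vector
`ξ + r⁻¹ A* ξ`. Comparing with `‖A + rB‖² = 1 + r²` gives `a² + b² = 1`.
-/

open Filter Topology RCLike ContinuousLinearMap
open scoped InnerProductSpace

lemma le_of_forall_le_add_div {x y K r₀ : ℝ} (h : ∀ r ≥ r₀, x ≤ y + K / r) : x ≤ y := by
  have hlim : Tendsto (fun r : ℝ => y + K / r) atTop (𝓝 y) := by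
    simpa using tendsto_const_nhds.add (tendsto_id.const_div_atTop K)
  exact ge_of_tendsto hlim (eventually_ge_atTop r₀ |>.mono h)

lemma two_mul_mul_le_of_sq_le {t s K C₁ C₂ : ℝ} (hC₁ : 0 < C₁) (h : K ^ 2 ≤ C₁ * C₂) :
    2 * t * s * K ≤ C₁ * t ^ 2 + C₂ * s ^ 2 := by
  have : 0 ≤ C₁ * (C₁ * t ^ 2 + C₂ * s ^ 2 - 2 * t * s * K) := by
    nlinarith [sq_nonneg (C₁ * t - K * s), sq_nonneg s]
  linarith [nonneg_of_mul_nonneg_right this hC₁]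

section QuadraticBounds

variable {a b r : ℝ}

lemma quadratic_form_le_add_div_mul (ha₀ : 0 ≤ a) (ha₁ : a ≤ 1) (hb₀ : 0 ≤ b) (hb₁ : b ≤ 1)
    (hr : 2 ≤ r) (t s : ℝ) :
    (b * t + s) ^ 2 + 2 * r * t * s * a + r ^ 2 * t ^ 2 ≤
      (r ^ 2 + (b ^ 2 + a ^ 2) + 4 / r) * (t ^ 2 + s ^ 2) := by
  have hc : r * (4 / r) = 4 := by field_simp
  have hc₀ : 0 < 4 / r := by positivity
  -- the difference of the two sides is a quadratic form in `(t, s)`; check its discriminant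
  have hdisc : (b + r * a) ^ 2 ≤ (a ^ 2 + 4 / r) * (r ^ 2 + a ^ 2 + b ^ 2 - 1 + 4 / r) := by
    nlinarith [mul_le_mul ha₁ hb₁ hb₀ zero_le_one, mul_nonneg hc₀.le (sq_nonneg a)]
  nlinarith [two_mul_mul_le_of_sq_le (t := t) (s := s) (by positivity) hdisc]

lemma sub_div_mul_le_quadratic (ha₀ : 0 ≤ a) (ha₁ : a ≤ 1) (hb₀ : 0 ≤ b) (hb₁ : b ≤ 1)
    (hr : 1 ≤ r) :
    (r ^ 2 + (b ^ 2 + a ^ 2) - 4 / r) * (1 + (a / r) ^ 2) ≤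
      b ^ 2 - 2 * b * a / r + 2 * a ^ 2 + r ^ 2 := by
  have hr₀ : 0 < r := by linarith
  rw [← sub_nonneg]
  have e : b ^ 2 - 2 * b * a / r + 2 * a ^ 2 + r ^ 2 -
        (r ^ 2 + (b ^ 2 + a ^ 2) - 4 / r) * (1 + (a / r) ^ 2) =
      ((4 - 2 * a * b) * r ^ 2 - a ^ 2 * (a ^ 2 + b ^ 2) * r + 4 * a ^ 2) / r ^ 3 := by
    field_simp; ring
  rw [e]
  apply div_nonneg _ (by positivity)
  have hab : a * b ≤ 1 := mul_le_one₀ ha₁ hb₀ hb₁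
  have ha₂ : a ^ 2 * (a ^ 2 + b ^ 2) ≤ 2 := by
    nlinarith [pow_le_one₀ ha₀ ha₁ (n := 2), pow_le_one₀ hb₀ hb₁ (n := 2)]
  nlinarith [mul_le_mul_of_nonneg_right hab (sq_nonneg r), mul_le_mul_of_nonneg_right ha₂ hr₀.le,
    sq_nonneg a]

end QuadraticBounds

lemma sq_norm_sub_two_mul_le_sq_norm_add {G : Type*} [SeminormedAddGroup G] (u w : G) :
    ‖u‖ ^ 2 - 2 * (‖u‖ * ‖w‖) ≤ ‖u + w‖ ^ 2 := by
  have h : ‖u‖ - ‖w‖ ≤ ‖u + w‖ := by simpa using norm_sub_le (u + w) w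
  rcases le_total ‖w‖ ‖u‖ with huw | huw
  · nlinarith [pow_le_pow_left₀ (sub_nonneg.mpr huw) h 2, sq_nonneg ‖w‖]
  · nlinarith [norm_nonneg u, norm_nonneg (u + w)]

section InnerProductSpace

variable {𝕜 E : Type*} [RCLike 𝕜] [NormedAddCommGroup E] [InnerProductSpace 𝕜 E]

lemma ContinuousLinearMap.sq_opNorm_le_of_forall {T : E →L[𝕜] E} {M : ℝ} (hM : 0 ≤ M)
    (h : ∀ x, ‖T x‖ ^ 2 ≤ M * ‖x‖ ^ 2) : ‖T‖ ^ 2 ≤ M := by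
  have hT : ‖T‖ ≤ √M := T.opNorm_le_bound (Real.sqrt_nonneg M) fun x => by
    rw [← Real.sqrt_sq (norm_nonneg x), ← Real.sqrt_mul hM]
    exact Real.le_sqrt_of_sq_le (h x)
  exact (Real.le_sqrt (norm_nonneg T) hM).mp hT

lemma sq_norm_add_of_inner_eq_zero {x y : E} (h : ⟪x, y⟫_𝕜 = 0) :
    ‖x + y‖ ^ 2 = ‖x‖ ^ 2 + ‖y‖ ^ 2 := by
  rw [@norm_add_sq 𝕜, h]; simp

lemma inner_eq_zero_of_forall_sq_norm_add_smul_le {v ξ : E} (hξ : ‖ξ‖ = 1)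
    (h : ∀ l : 𝕜, ‖v + l • ξ‖ ^ 2 ≤ 1 + ‖l‖ ^ 2) : ⟪v, ξ⟫_𝕜 = 0 := by
  by_contra hv
  have := h (⟪v, ξ⟫_𝕜)⁻¹
  rw [@norm_add_sq 𝕜, inner_smul_right, inv_mul_cancel₀ hv, norm_smul, hξ] at this
  simp only [one_re, mul_one] at this
  nlinarith [sq_nonneg ‖v‖]

variable [CompleteSpace E] {ξ : E} {A B : E →L[𝕜] E}

lemma sq_norm_add_smul_apply_le (hξ : ‖ξ‖ = 1) (hB : ∀ x, B x = ⟪ξ, x⟫_𝕜 • ξ) (hA : ‖A‖ ≤ 1)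
    (hAξ : ⟪A ξ, ξ⟫_𝕜 = 0) {r : ℝ} (hr : 0 ≤ r) (μ : 𝕜) {y : E} (hy : ⟪ξ, y⟫_𝕜 = 0) :
    ‖(A + (r : 𝕜) • B) (μ • ξ + y)‖ ^ 2 ≤
      (‖A ξ‖ * ‖μ‖ + ‖y‖) ^ 2 + 2 * r * ‖μ‖ * ‖y‖ * ‖adjoint A ξ‖ + r ^ 2 * ‖μ‖ ^ 2 := by
  set x := μ • ξ + y
  have hTx : (A + (r : 𝕜) • B) x = A x + ((r : 𝕜) * μ) • ξ := by
    simp [x, hB, inner_add_right, inner_smul_right, hξ, hy, smul_smul]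
  have hAxξ : ⟪A x, ξ⟫_𝕜 = ⟪y, adjoint A ξ⟫_𝕜 := by
    rw [← adjoint_inner_right, inner_add_left, inner_smul_left, adjoint_inner_right, hAξ]
    simp
  have hcross : re ⟪A x, ((r : 𝕜) * μ) • ξ⟫_𝕜 ≤ r * ‖μ‖ * (‖y‖ * ‖adjoint A ξ‖) := by
    rw [inner_smul_right, hAxξ]
    calc re ((r : 𝕜) * μ * ⟪y, adjoint A ξ⟫_𝕜)
        ≤ ‖(r : 𝕜) * μ * ⟪y, adjoint A ξ⟫_𝕜‖ := re_le_norm _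
      _ = r * ‖μ‖ * ‖⟪y, adjoint A ξ⟫_𝕜‖ := by simp [abs_of_nonneg hr]
      _ ≤ r * ‖μ‖ * (‖y‖ * ‖adjoint A ξ‖) := by gcongr; exact norm_inner_le_norm _ _
  have hAx : ‖A x‖ ≤ ‖A ξ‖ * ‖μ‖ + ‖y‖ :=
    calc ‖A x‖ ≤ ‖μ • A ξ‖ + ‖A y‖ := by simpa [x] using norm_add_le (μ • A ξ) (A y)
      _ ≤ ‖A ξ‖ * ‖μ‖ + ‖y‖ := by
        rw [norm_smul, mul_comm]; gcongr; simpa using A.le_of_opNorm_le hA y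
  rw [hTx, @norm_add_sq 𝕜, norm_smul, hξ, norm_mul, norm_ofReal, abs_of_nonneg hr]
  nlinarith [pow_le_pow_left₀ (norm_nonneg _) hAx 2]

lemma sq_norm_add_smul_le (hξ : ‖ξ‖ = 1) (hB : ∀ x, B x = ⟪ξ, x⟫_𝕜 • ξ) (hA : ‖A‖ ≤ 1)
    (hAξ : ⟪A ξ, ξ⟫_𝕜 = 0) {r : ℝ} (hr : 2 ≤ r) :
    ‖A + (r : 𝕜) • B‖ ^ 2 ≤ r ^ 2 + (‖A ξ‖ ^ 2 + ‖adjoint A ξ‖ ^ 2) + 4 / r := by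
  have hb₁ : ‖A ξ‖ ≤ 1 := by simpa [hξ] using A.le_of_opNorm_le hA ξ
  have ha₁ : ‖adjoint A ξ‖ ≤ 1 := by
    simpa [hξ] using (adjoint A).le_of_opNorm_le (by rwa [LinearIsometryEquiv.norm_map]) ξ
  refine sq_opNorm_le_of_forall (by positivity) fun x => ?_
  set μ := ⟪ξ, x⟫_𝕜
  set y := x - μ • ξ
  have hy : ⟪ξ, y⟫_𝕜 = 0 := by simp [y, μ, inner_sub_right, inner_smul_right, hξ]
  have hx : x = μ • ξ + y := (add_sub_cancel (μ • ξ) x).symm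
  have hnorm : ‖x‖ ^ 2 = ‖μ‖ ^ 2 + ‖y‖ ^ 2 := by
    rw [hx, sq_norm_add_of_inner_eq_zero (by rw [inner_smul_left, hy, mul_zero]), norm_smul, hξ,
      mul_one]
  rw [hnorm, hx]
  exact (sq_norm_add_smul_apply_le hξ hB hA hAξ (by linarith) μ hy).trans
    (quadratic_form_le_add_div_mul (norm_nonneg _) ha₁ (norm_nonneg _) hb₁ hr _ _)

lemma le_sq_norm_add_smul_mul (hξ : ‖ξ‖ = 1) (hB : ∀ x, B x = ⟪ξ, x⟫_𝕜 • ξ) (hA : ‖A‖ ≤ 1)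
    (hAξ : ⟪A ξ, ξ⟫_𝕜 = 0) {r : ℝ} (hr : 0 < r) :
    ‖A ξ‖ ^ 2 - 2 * ‖A ξ‖ * ‖adjoint A ξ‖ / r + 2 * ‖adjoint A ξ‖ ^ 2 + r ^ 2 ≤
      ‖A + (r : 𝕜) • B‖ ^ 2 * (1 + (‖adjoint A ξ‖ / r) ^ 2) := by
  set x := ξ + (r : 𝕜)⁻¹ • adjoint A ξ
  have hperp : ⟪ξ, adjoint A ξ⟫_𝕜 = 0 := by rwa [adjoint_inner_right]
  have hnorm_smul : ‖(r : 𝕜)⁻¹ • adjoint A ξ‖ = ‖adjoint A ξ‖ / r := by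
    rw [norm_smul, norm_inv, norm_ofReal, abs_of_pos hr, inv_mul_eq_div]
  have hx : ‖x‖ ^ 2 = 1 + (‖adjoint A ξ‖ / r) ^ 2 := by
    rw [sq_norm_add_of_inner_eq_zero (by rw [inner_smul_right, hperp, mul_zero]), hξ, hnorm_smul,
      one_pow]
  have hTx : (A + (r : 𝕜) • B) x = A x + (r : 𝕜) • ξ := by
    simp [x, hB, inner_add_right, inner_smul_right, hξ, hperp]
  have hcross : re ⟪A x, (r : 𝕜) • ξ⟫_𝕜 = ‖adjoint A ξ‖ ^ 2 := by
    rw [inner_smul_right, ← adjoint_inner_right, inner_add_left, hperp, inner_smul_left,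
      inner_self_eq_norm_sq_to_K]
    simp [hr.ne']
  have hAx : ‖A ξ‖ ^ 2 - 2 * (‖A ξ‖ * (‖adjoint A ξ‖ / r)) ≤ ‖A x‖ ^ 2 := by
    have hAx' : ‖A ((r : 𝕜)⁻¹ • adjoint A ξ)‖ ≤ ‖adjoint A ξ‖ / r := by
      simpa [hnorm_smul] using A.le_of_opNorm_le hA ((r : 𝕜)⁻¹ • adjoint A ξ)
    calc _ ≤ ‖A ξ‖ ^ 2 - 2 * (‖A ξ‖ * ‖A ((r : 𝕜)⁻¹ • adjoint A ξ)‖) := by gcongr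
      _ ≤ ‖A x‖ ^ 2 := by simpa [x] using sq_norm_sub_two_mul_le_sq_norm_add (A ξ) _
  have hTx_sq : ‖(A + (r : 𝕜) • B) x‖ ^ 2 = ‖A x‖ ^ 2 + 2 * ‖adjoint A ξ‖ ^ 2 + r ^ 2 := by
    rw [hTx, @norm_add_sq 𝕜, hcross, norm_smul, hξ, norm_ofReal, abs_of_pos hr, mul_one]
  calc _ ≤ ‖(A + (r : 𝕜) • B) x‖ ^ 2 := by
        rw [hTx_sq]
        linarith [show 2 * ‖A ξ‖ * ‖adjoint A ξ‖ / r = 2 * (‖A ξ‖ * (‖adjoint A ξ‖ / r)) by ring]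
    _ ≤ (‖A + (r : 𝕜) • B‖ * ‖x‖) ^ 2 := by gcongr; exact le_opNorm _ x
    _ = _ := by rw [mul_pow, hx]

lemma le_sq_norm_add_smul (hξ : ‖ξ‖ = 1) (hB : ∀ x, B x = ⟪ξ, x⟫_𝕜 • ξ) (hA : ‖A‖ ≤ 1)
    (hAξ : ⟪A ξ, ξ⟫_𝕜 = 0) {r : ℝ} (hr : 1 ≤ r) :
    r ^ 2 + (‖A ξ‖ ^ 2 + ‖adjoint A ξ‖ ^ 2) - 4 / r ≤ ‖A + (r : 𝕜) • B‖ ^ 2 := by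
  have hb₁ : ‖A ξ‖ ≤ 1 := by simpa [hξ] using A.le_of_opNorm_le hA ξ
  have ha₁ : ‖adjoint A ξ‖ ≤ 1 := by
    simpa [hξ] using (adjoint A).le_of_opNorm_le (by rwa [LinearIsometryEquiv.norm_map]) ξ
  refine le_of_mul_le_mul_right ?_ (by positivity : 0 < 1 + (‖adjoint A ξ‖ / r) ^ 2)
  exact (sub_div_mul_le_quadratic (norm_nonneg _) ha₁ (norm_nonneg _) hb₁ hr).trans
    (le_sq_norm_add_smul_mul hξ hB hA hAξ (by linarith))

end InnerProductSpace

theorem orthogonal_to_rank_one_projection_general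
    {H : Type*} [NormedAddCommGroup H] [InnerProductSpace ℂ H] [CompleteSpace H]
    (ξ : H) (hξ : ‖ξ‖ = 1) (A B : H →L[ℂ] H)
    (hB : ∀ x : H, B x = (inner ℂ ξ x : ℂ) • ξ)
    (horth : ∀ l : ℂ, ‖A + l • B‖ ^ 2 = 1 + ‖l‖ ^ 2) :
    (inner ℂ (A ξ) ξ : ℂ) = 0 ∧
      ‖A ξ‖ ^ 2 + ‖ContinuousLinearMap.adjoint A ξ‖ ^ 2 = 1 := by
  have hA : ‖A‖ ≤ 1 := by
    have h := horth 0
    simp only [zero_smul, add_zero, norm_zero] at h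
    nlinarith [norm_nonneg A]
  have hAξ : ⟪A ξ, ξ⟫_ℂ = 0 := inner_eq_zero_of_forall_sq_norm_add_smul_le hξ fun l =>
    calc ‖A ξ + l • ξ‖ ^ 2 = ‖(A + l • B) ξ‖ ^ 2 := by simp [hB, hξ]
      _ ≤ ‖A + l • B‖ ^ 2 := by gcongr; simpa [hξ] using le_opNorm (A + l • B) ξ
      _ = 1 + ‖l‖ ^ 2 := horth l
  refine ⟨hAξ, le_antisymm ?_ ?_⟩
  · refine le_of_forall_le_add_div (r₀ := 1) (K := 4) fun r hr => ?_
    have := le_sq_norm_add_smul hξ hB hA hAξ hr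
    rw [horth, norm_ofReal, abs_of_nonneg (by linarith)] at this
    linarith
  · refine le_of_forall_le_add_div (r₀ := 2) (K := 4) fun r hr => ?_
    have := sq_norm_add_smul_le hξ hB hA hAξ hr
    rw [horth, norm_ofReal, abs_of_nonneg (by linarith)] at this
    linarith

/-- If `B` is the rank-one orthogonal projection onto `ℂξ` (`ξ` a unit vector), `‖A‖ = 1`
and `A ⊥_P B`, then `⟨Aξ, ξ⟩ = 0` and `‖Aξ‖² + ‖A*ξ‖² = 1`. -/
theorem orthogonal_to_rank_one_projection
    {H : Type*} [NormedAddCommGroup H] [InnerProductSpace ℂ H] [CompleteSpace H]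
    (ξ : H) (hξ : ‖ξ‖ = 1) (A B : H →L[ℂ] H)
    (hB : ∀ x : H, B x = (inner ℂ ξ x : ℂ) • ξ)
    (hA : ‖A‖ = 1)
    (horth : ∀ l : ℂ, ‖A + l • B‖ ^ 2 = 1 + ‖l‖ ^ 2) :
    (inner ℂ (A ξ) ξ : ℂ) = 0 ∧
      ‖A ξ‖ ^ 2 + ‖ContinuousLinearMap.adjoint A ξ‖ ^ 2 = 1 :=
  orthogonal_to_rank_one_projection_general ξ hξ A B hB horth
end

section
/- Let b ∈ ℝ with 0 < b < 1 and let α, β ∈ ℂ with β ≠ 0 and |α|² ≤ (1 − |β|²)(1 − b²). Define the 3×3 complex matrices A with rows (0,0,1), (0,α,0), (0,β,0) and B = diag(1, b, 0). Then ‖A‖ = 1 = ‖B‖ in the operator norm induced by the Euclidean norm on ℂ³, and ‖A + λB‖² = 1 + |λ|² for all λ ∈ ℂ, i.e. A and B are Pythagoras orthogonal. -/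
/-!
A matrix of the shape `!![p, 0, q; 0, r, 0; 0, s, 0]` acts as the row `(p, q)` on `span(e₀, e₂)`
and as the column `(r, s)` on `e₁`, so its squared operator norm is the larger of
`‖p‖² + ‖q‖²` and `‖r‖² + ‖s‖²`. The matrices `A`, `B` and `A + λB` all have this shape; for
`A + λB` the row contributes `1 + |λ|²`, and the hypothesis on `α, β, b` is exactly what keeps the
column `(α + λb, β)` below that, by completing a square.
-/

open scoped Matrix.Norms.L2Operator

theorem norm_mul_add_mul_sq_le {𝕜 : Type*} [RCLike 𝕜] (p q x y : 𝕜) :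
    ‖p * x + q * y‖ ^ 2 ≤ (‖p‖ ^ 2 + ‖q‖ ^ 2) * (‖x‖ ^ 2 + ‖y‖ ^ 2) := by
  have h : ‖p * x + q * y‖ ≤ ‖p‖ * ‖x‖ + ‖q‖ * ‖y‖ :=
    (norm_add_le _ _).trans_eq (by rw [norm_mul, norm_mul])
  nlinarith [pow_le_pow_left₀ (norm_nonneg _) h 2, sq_nonneg (‖p‖ * ‖y‖ - ‖q‖ * ‖x‖)]

theorem add_mul_sq_add_le_one_add_sq {a b c : ℝ} (hb : b ^ 2 < 1)
    (h : a ^ 2 ≤ (1 - c) * (1 - b ^ 2)) (t : ℝ) : (a + t * b) ^ 2 + c ≤ 1 + t ^ 2 := by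
  -- `(1 - b²) (1 + t² - c - (a + tb)²) ≥ (ab - t (1 - b²))²`
  nlinarith [sq_nonneg (a * b - t * (1 - b ^ 2))]

namespace Matrix

variable {𝕜 m n : Type*} [RCLike 𝕜] [Fintype m] [Fintype n] [DecidableEq n]

theorem l2_opNorm_sq_le_of_forall {M : Matrix m n 𝕜} {c : ℝ} (hc : 0 ≤ c)
    (h : ∀ x : n → 𝕜, ∑ i, ‖(M *ᵥ x) i‖ ^ 2 ≤ c * ∑ j, ‖x j‖ ^ 2) : ‖M‖ ^ 2 ≤ c := by
  suffices ‖M‖ ≤ √c from (pow_le_pow_left₀ (norm_nonneg _) this 2).trans (Real.sq_sqrt hc).le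
  rw [l2_opNorm_def]
  refine ContinuousLinearMap.opNorm_le_bound _ (Real.sqrt_nonneg c) fun x ↦ ?_
  rw [← Real.sqrt_sq (norm_nonneg x), ← Real.sqrt_mul hc, EuclideanSpace.norm_eq]
  exact Real.sqrt_le_sqrt <| by simpa [EuclideanSpace.norm_sq_eq] using h x

theorem sum_norm_sq_col_le_l2_opNorm_sq (M : Matrix m n 𝕜) (j : n) :
    ∑ i, ‖M i j‖ ^ 2 ≤ ‖M‖ ^ 2 := by
  have h := M.l2_opNorm_mulVec (PiLp.single 2 j 1)
  rw [PiLp.norm_single, norm_one, mul_one] at h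
  simpa [EuclideanSpace.norm_sq_eq] using pow_le_pow_left₀ (norm_nonneg _) h 2

theorem sum_norm_sq_row_le_l2_opNorm_sq [DecidableEq m] (M : Matrix m n 𝕜) (i : m) :
    ∑ j, ‖M i j‖ ^ 2 ≤ ‖M‖ ^ 2 := by
  simpa [l2_opNorm_conjTranspose] using Mᴴ.sum_norm_sq_col_le_l2_opNorm_sq i

theorem l2_opNorm_sq_of_row_column (p q r s : 𝕜) :
    ‖!![p, 0, q; 0, r, 0; 0, s, 0]‖ ^ 2 = max (‖p‖ ^ 2 + ‖q‖ ^ 2) (‖r‖ ^ 2 + ‖s‖ ^ 2) := by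
  set M : Matrix (Fin 3) (Fin 3) 𝕜 := !![p, 0, q; 0, r, 0; 0, s, 0]
  refine le_antisymm (l2_opNorm_sq_le_of_forall (by positivity) fun x ↦ ?_) (max_le ?_ ?_)
  · simp only [mulVec, dotProduct, of_apply, cons_val', cons_val_fin_one, Fin.sum_univ_three,
      Fin.isValue, cons_val_zero, cons_val_one, cons_val, zero_mul, add_zero, zero_add, norm_mul,
      mul_pow, M]
    set N := max (‖p‖ ^ 2 + ‖q‖ ^ 2) (‖r‖ ^ 2 + ‖s‖ ^ 2)
    have hpq : (‖p‖ ^ 2 + ‖q‖ ^ 2) * (‖x 0‖ ^ 2 + ‖x 2‖ ^ 2) ≤ N * (‖x 0‖ ^ 2 + ‖x 2‖ ^ 2) := by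
      gcongr; exact le_max_left ..
    have hrs : (‖r‖ ^ 2 + ‖s‖ ^ 2) * ‖x 1‖ ^ 2 ≤ N * ‖x 1‖ ^ 2 := by
      gcongr; exact le_max_right ..
    linarith [norm_mul_add_mul_sq_le p q (x 0) (x 2)]
  · simpa [M, Fin.sum_univ_three] using M.sum_norm_sq_row_le_l2_opNorm_sq 0
  · simpa [M, Fin.sum_univ_three] using M.sum_norm_sq_col_le_l2_opNorm_sq 1

end Matrix

theorem example_pythagoras_orthogonal_pair_3x3_general
    (b : ℝ) (hb0 : 0 < b) (hb1 : b < 1) (α β : ℂ)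
    (hαβ : ‖α‖ ^ 2 ≤ (1 - ‖β‖ ^ 2) * (1 - b ^ 2)) :
    ‖(!![0, 0, 1; 0, α, 0; 0, β, 0] : Matrix (Fin 3) (Fin 3) ℂ)‖ = 1 ∧
      ‖(!![1, 0, 0; 0, (b : ℂ), 0; 0, 0, 0] : Matrix (Fin 3) (Fin 3) ℂ)‖ = 1 ∧
      ∀ l : ℂ,
        ‖(!![0, 0, 1; 0, α, 0; 0, β, 0] : Matrix (Fin 3) (Fin 3) ℂ) +
            l • (!![1, 0, 0; 0, (b : ℂ), 0; 0, 0, 0] : Matrix (Fin 3) (Fin 3) ℂ)‖ ^ 2 =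
          1 + ‖l‖ ^ 2 := by
  have hb : b ^ 2 < 1 := by nlinarith
  have hcol (l : ℂ) : ‖α + l * b‖ ^ 2 + ‖β‖ ^ 2 ≤ 1 + ‖l‖ ^ 2 := by
    have : ‖α + l * b‖ ≤ ‖α‖ + ‖l‖ * b := by
      grw [norm_add_le, norm_mul, Complex.norm_real, Real.norm_of_nonneg hb0.le]
    grw [this]
    exact add_mul_sq_add_le_one_add_sq hb hαβ ‖l‖
  have norm_eq_one {M : Matrix (Fin 3) (Fin 3) ℂ} (h : ‖M‖ ^ 2 = 1) : ‖M‖ = 1 :=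
    (pow_eq_one_iff_of_nonneg (norm_nonneg M) two_ne_zero).1 h
  refine ⟨norm_eq_one ?_, norm_eq_one ?_, fun l ↦ ?_⟩
  · simpa [Matrix.l2_opNorm_sq_of_row_column] using hcol 0
  · simpa [Matrix.l2_opNorm_sq_of_row_column, abs_of_pos hb0] using hb.le
  · have : (!![0, 0, 1; 0, α, 0; 0, β, 0] : Matrix (Fin 3) (Fin 3) ℂ) +
        l • !![1, 0, 0; 0, (b : ℂ), 0; 0, 0, 0] = !![l, 0, 1; 0, α + l * b, 0; 0, β, 0] := by
      ext i j; fin_cases i <;> fin_cases j <;> simp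
    rw [this, Matrix.l2_opNorm_sq_of_row_column, norm_one, one_pow,
      max_eq_left ((hcol l).trans_eq (add_comm _ _)), add_comm]

/-- For `0 < b < 1`, `β ≠ 0` and `|α|² ≤ (1 − |β|²)(1 − b²)`, the matrices
`A = (0,0,1; 0,α,0; 0,β,0)` and `B = diag(1, b, 0)` have norm one and are Pythagoras
orthogonal. -/
theorem example_pythagoras_orthogonal_pair_3x3
    (b : ℝ) (hb0 : 0 < b) (hb1 : b < 1) (α β : ℂ) (hβ : β ≠ 0)
    (hαβ : ‖α‖ ^ 2 ≤ (1 - ‖β‖ ^ 2) * (1 - b ^ 2)) :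
    ‖(!![0, 0, 1; 0, α, 0; 0, β, 0] : Matrix (Fin 3) (Fin 3) ℂ)‖ = 1 ∧
      ‖(!![1, 0, 0; 0, (b : ℂ), 0; 0, 0, 0] : Matrix (Fin 3) (Fin 3) ℂ)‖ = 1 ∧
      ∀ l : ℂ,
        ‖(!![0, 0, 1; 0, α, 0; 0, β, 0] : Matrix (Fin 3) (Fin 3) ℂ) +
            l • (!![1, 0, 0; 0, (b : ℂ), 0; 0, 0, 0] : Matrix (Fin 3) (Fin 3) ℂ)‖ ^ 2 =
          1 + ‖l‖ ^ 2 :=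
  example_pythagoras_orthogonal_pair_3x3_general b hb0 hb1 α β hαβ
end
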